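/- arXiv:2109.01829 — 5 statements merged into one kernel-verified Lean document; each statement's English description precedes it below -/
import Mathlib

section
/- Let g ∈ ℝⁿ \ {0}, let H be a symmetric n×n real matrix, and let ρ: ℝ → [0,∞] be a proper closed convex function with ρ(0) = 0 satisfying Assumptions 1–3. Set λ̃ := min{0, λ_min(H)}. Then the function λ ↦ ‖(H − λI)⁻¹g‖² − (ρ⁺)'(−λ) is continuous and strictly increasing on (−∞, λ̃), and limsup_{λ→−∞} [‖(H − λI)⁻¹g‖² − (ρ⁺)'(−λ)] < 0. If in addition lim_{λ↑λ̃} ‖(H − λI)⁻¹g‖² = ∞, then there exists a unique λ* ∈ (−∞, λ̃) such that ‖(H − λ*I)⁻¹g‖² = (ρ⁺)'(−λ*). -/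
open Matrix Filter Set Topology

noncomputable section

/-- The quadratic part `2 gᵀ x + xᵀ H x` of the objective. -/
def quadObj {n : ℕ} (g : Fin n → ℝ) (H : Matrix (Fin n) (Fin n) ℝ) (x : Fin n → ℝ) : ℝ :=
  2 * (g ⬝ᵥ x) + x ⬝ᵥ H.mulVec x

/-- The squared Euclidean norm `‖x‖²`. -/
def nsq {m : Type*} [Fintype m] (x : m → ℝ) : ℝ := x ⬝ᵥ x

/-- The Euclidean norm `‖x‖`. -/
def vnorm {m : Type*} [Fintype m] (x : m → ℝ) : ℝ := Real.sqrt (x ⬝ᵥ x)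

/-- `ρ : ℝ → [0,∞]` is proper closed (lsc) convex with `ρ 0 = 0`. -/
def RhoBasic (ρ : ℝ → EReal) : Prop :=
  (∀ t, 0 ≤ ρ t) ∧ ρ 0 = 0 ∧ LowerSemicontinuous ρ ∧
    ∀ a b θ : ℝ, 0 ≤ θ → θ ≤ 1 →
      ρ (θ * a + (1 - θ) * b) ≤ (θ : EReal) * ρ a + ((1 - θ : ℝ) : EReal) * ρ b

/-- Assumption 1: `ρ` is nondecreasing, vanishes on `(-∞,0]`, finite somewhere on `(0,∞)`. -/
def Assump1 (ρ : ℝ → EReal) : Prop :=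
  Monotone ρ ∧ (∀ t ≤ (0:ℝ), ρ t = 0) ∧ ∃ t₀ : ℝ, 0 < t₀ ∧ ρ t₀ < ⊤

/-- Assumption 2: supercoercivity, `lim_{t→∞} ρ(t)/t = ∞`. -/
def Assump2 (ρ : ℝ → EReal) : Prop :=
  ∀ M : ℝ, ∀ᶠ t : ℝ in atTop, ((M * t : ℝ) : EReal) ≤ ρ t

/-- The monotone conjugate `ρ⁺(u) = sup_{t ≥ 0} (ut − ρ(t))`. -/
def mconj (ρ : ℝ → EReal) (u : ℝ) : EReal :=
  ⨆ t : {t : ℝ // 0 ≤ t}, (((u * (t : ℝ) : ℝ) : EReal) - ρ t)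

/-- The real-valued monotone conjugate (under supercoercivity `ρ⁺` is finite). -/
def mconjR (ρ : ℝ → EReal) (u : ℝ) : ℝ := (mconj ρ u).toReal

/-- Assumption 3: `ρ⁺` is differentiable on `(0,∞)`. -/
def Assump3 (ρ : ℝ → EReal) : Prop :=
  ∀ u : ℝ, 0 < u → DifferentiableAt ℝ (mconjR ρ) u

/-- Convex subdifferential of an `EReal`-valued function on `ℝ`. -/
def subdiff (f : ℝ → EReal) (x : ℝ) : Set ℝ :=
  {s : ℝ | ∀ y : ℝ, f x + ((s * (y - x) : ℝ) : EReal) ≤ f y}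

/-- Indicator function `δ_{ℝ₊}` of `[0,∞)`. -/
def indNonneg : ℝ → EReal := fun t => if 0 ≤ t then (0 : EReal) else ⊤

/-- Smallest eigenvalue of a symmetric matrix, via the Rayleigh quotient. -/
def lambdaMin {m : Type*} [Fintype m] (A : Matrix m m ℝ) : ℝ :=
  ⨅ x : {x : m → ℝ // x ⬝ᵥ x = 1}, ((x : m → ℝ) ⬝ᵥ A.mulVec (x : m → ℝ))

/-- Euclidean operator norm of a matrix. -/
def opNorm {m : Type*} [Fintype m] (A : Matrix m m ℝ) : ℝ :=
  ⨆ x : {x : m → ℝ // x ⬝ᵥ x = 1}, vnorm (A.mulVec (x : m → ℝ))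

/-- The bordered matrix `B(t) = [[t, gᵀ],[g, H]]`. -/
def Bmat {n : ℕ} (g : Fin n → ℝ) (H : Matrix (Fin n) (Fin n) ℝ) (t : ℝ) :
    Matrix (Fin (n+1)) (Fin (n+1)) ℝ :=
  Matrix.of (Fin.cons (Fin.cons t g) (fun i => Fin.cons (g i) (H i)))

/-- Moore–Penrose pseudoinverse of a real symmetric matrix (via the spectral theorem). -/
def symPinv {n : ℕ} (A : Matrix (Fin n) (Fin n) ℝ) : Matrix (Fin n) (Fin n) ℝ :=
  if h : A.IsHermitian then
    (h.eigenvectorUnitary : Matrix (Fin n) (Fin n) ℝ) *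
      Matrix.diagonal (fun i => (h.eigenvalues i)⁻¹) *
      star (h.eigenvectorUnitary : Matrix (Fin n) (Fin n) ℝ)
  else 0

/-- The set of minimizers of `ρ`. -/
def argminSet (ρ : ℝ → EReal) : Set ℝ := {t : ℝ | ∀ s : ℝ, ρ t ≤ ρ s}

/-- The RW-dual function `k̂(t) = inf_{γ ≥ 0} { ρ(γ−1) + γ λ_min(B(t)) }`. -/
def khat {n : ℕ} (ρ : ℝ → EReal) (g : Fin n → ℝ) (H : Matrix (Fin n) (Fin n) ℝ) (t : ℝ) : EReal :=
  ⨅ γ : {γ : ℝ // 0 ≤ γ},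
    (ρ ((γ : ℝ) - 1) + ((((γ : ℝ) * lambdaMin (Bmat g H t)) : ℝ) : EReal))


namespace Stmt7Aux

variable {n : ℕ}

lemma decomp {H : Matrix (Fin n) (Fin n) ℝ} (hH : H.IsHermitian) (l : ℝ) :
    H - l • (1 : Matrix (Fin n) (Fin n) ℝ)
      = (hH.eigenvectorUnitary : Matrix (Fin n) (Fin n) ℝ)
        * diagonal (fun i => hH.eigenvalues i - l)
        * star (hH.eigenvectorUnitary : Matrix (Fin n) (Fin n) ℝ) := by
  set U := (hH.eigenvectorUnitary : Matrix (Fin n) (Fin n) ℝ)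
  have hUU : U * star U = 1 := Matrix.mem_unitaryGroup_iff.mp hH.eigenvectorUnitary.2
  have h1 : H = U * diagonal hH.eigenvalues * star U := by
    have := hH.spectral_theorem
    simpa using this
  have h2 : diagonal (fun i => hH.eigenvalues i - l)
      = diagonal hH.eigenvalues - l • (1 : Matrix (Fin n) (Fin n) ℝ) := by
    ext i j
    by_cases h : i = j <;> simp [Matrix.diagonal_apply, Matrix.one_apply, h]
  rw [h2, mul_sub, sub_mul, ← h1]
  congr 1
  rw [mul_smul_comm, smul_mul_assoc, mul_one, hUU]

lemma inv_decomp {H : Matrix (Fin n) (Fin n) ℝ} (hH : H.IsHermitian) (l : ℝ)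
    (hl : ∀ i, hH.eigenvalues i - l ≠ 0) :
    (H - l • (1 : Matrix (Fin n) (Fin n) ℝ))⁻¹
      = (hH.eigenvectorUnitary : Matrix (Fin n) (Fin n) ℝ)
        * diagonal (fun i => (hH.eigenvalues i - l)⁻¹)
        * star (hH.eigenvectorUnitary : Matrix (Fin n) (Fin n) ℝ) := by
  set U := (hH.eigenvectorUnitary : Matrix (Fin n) (Fin n) ℝ)
  have hUU : U * star U = 1 := Matrix.mem_unitaryGroup_iff.mp hH.eigenvectorUnitary.2
  have hUU' : star U * U = 1 := Matrix.mem_unitaryGroup_iff'.mp hH.eigenvectorUnitary.2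
  apply Matrix.inv_eq_right_inv
  rw [decomp hH l]
  have key : star U * (U * (diagonal (fun i => (hH.eigenvalues i - l)⁻¹) * star U))
      = diagonal (fun i => (hH.eigenvalues i - l)⁻¹) * star U := by
    rw [← Matrix.mul_assoc, hUU', Matrix.one_mul]
  have : (U * diagonal (fun i => hH.eigenvalues i - l) * star U)
      * (U * diagonal (fun i => (hH.eigenvalues i - l)⁻¹) * star U)
      = U * (diagonal (fun i => hH.eigenvalues i - l)
          * diagonal (fun i => (hH.eigenvalues i - l)⁻¹)) * star U := by
    simp only [Matrix.mul_assoc, key]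
  rw [this, Matrix.diagonal_mul_diagonal]
  have : (fun i => (hH.eigenvalues i - l) * (hH.eigenvalues i - l)⁻¹) = fun _ => (1:ℝ) := by
    funext i; exact mul_inv_cancel₀ (hl i)
  rw [this, Matrix.diagonal_one, Matrix.mul_one, hUU]

lemma nsq_formula {H : Matrix (Fin n) (Fin n) ℝ} (hH : H.IsHermitian) (g : Fin n → ℝ) (l : ℝ)
    (hl : ∀ i, hH.eigenvalues i - l ≠ 0) :
    nsq (((H - l • (1 : Matrix (Fin n) (Fin n) ℝ))⁻¹).mulVec g)
      = ∑ i, ((star (hH.eigenvectorUnitary : Matrix (Fin n) (Fin n) ℝ)).mulVec g i)^2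
          * ((hH.eigenvalues i - l)^2)⁻¹ := by
  set U := (hH.eigenvectorUnitary : Matrix (Fin n) (Fin n) ℝ)
  have hUU' : star U * U = 1 := Matrix.mem_unitaryGroup_iff'.mp hH.eigenvectorUnitary.2
  set c := (star U).mulVec g with hc
  rw [inv_decomp hH l hl]
  have h1 : (U * diagonal (fun i => (hH.eigenvalues i - l)⁻¹) * star U).mulVec g
      = U.mulVec ((diagonal (fun i => (hH.eigenvalues i - l)⁻¹)).mulVec c) := by
    rw [← Matrix.mulVec_mulVec, ← Matrix.mulVec_mulVec]
  rw [h1]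
  have h2 : ∀ x : Fin n → ℝ, nsq (U.mulVec x) = nsq x := by
    intro x
    unfold nsq
    rw [Matrix.dotProduct_mulVec, ← Matrix.mulVec_transpose, Matrix.mulVec_mulVec,
      ← Matrix.conjTranspose_eq_transpose_of_trivial, ← Matrix.star_eq_conjTranspose, hUU',
      Matrix.one_mulVec]
  rw [h2]
  unfold nsq
  rw [dotProduct]
  apply Finset.sum_congr rfl
  intro i _
  rw [Matrix.mulVec_diagonal]
  rw [← inv_pow]
  ring

lemma rayleigh_bddBelow (H : Matrix (Fin n) (Fin n) ℝ) :
    BddBelow (Set.range (fun x : {x : Fin n → ℝ // x ⬝ᵥ x = 1} =>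
      (x : Fin n → ℝ) ⬝ᵥ H.mulVec (x : Fin n → ℝ))) := by
  refine ⟨-(∑ i, ∑ j, |H i j|), ?_⟩
  rintro r ⟨⟨x, hx⟩, rfl⟩
  simp only
  have hxi : ∀ i, |x i| ≤ 1 := by
    intro i
    rw [abs_le_one_iff_mul_self_le_one]
    calc x i * x i ≤ ∑ j, x j * x j :=
          Finset.single_le_sum (fun j _ => mul_self_nonneg (x j)) (Finset.mem_univ i)
      _ = 1 := hx
  have habs : |x ⬝ᵥ H.mulVec x| ≤ ∑ i, ∑ j, |H i j| := by
    rw [dotProduct]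
    refine (Finset.abs_sum_le_sum_abs _ _).trans ?_
    refine Finset.sum_le_sum fun i _ => ?_
    rw [abs_mul, Matrix.mulVec, dotProduct]
    calc |x i| * |∑ j, H i j * x j| ≤ 1 * |∑ j, H i j * x j| := by
          apply mul_le_mul_of_nonneg_right (hxi i) (abs_nonneg _)
      _ = |∑ j, H i j * x j| := one_mul _
      _ ≤ ∑ j, |H i j * x j| := Finset.abs_sum_le_sum_abs _ _
      _ ≤ ∑ j, |H i j| := by
          refine Finset.sum_le_sum fun j _ => ?_
          rw [abs_mul]
          calc |H i j| * |x j| ≤ |H i j| * 1 :=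
                mul_le_mul_of_nonneg_left (hxi j) (abs_nonneg _)
            _ = |H i j| := mul_one _
  linarith [neg_abs_le (x ⬝ᵥ H.mulVec x)]

lemma lambdaMin_le_eigenvalues {H : Matrix (Fin n) (Fin n) ℝ} (hH : H.IsHermitian) (i : Fin n) :
    lambdaMin H ≤ hH.eigenvalues i := by
  set u : Fin n → ℝ := fun k => (hH.eigenvectorUnitary : Matrix (Fin n) (Fin n) ℝ) k i with hu
  have hUU' : star (hH.eigenvectorUnitary : Matrix (Fin n) (Fin n) ℝ)
      * (hH.eigenvectorUnitary : Matrix (Fin n) (Fin n) ℝ) = 1 :=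
    Matrix.mem_unitaryGroup_iff'.mp hH.eigenvectorUnitary.2
  have hnorm : u ⬝ᵥ u = 1 := by
    have := congrFun (congrFun hUU' i) i
    simp only [Matrix.mul_apply, Matrix.one_apply_eq, Matrix.star_apply, star_trivial] at this
    rw [dotProduct, ← this]
  have heig : H.mulVec u = hH.eigenvalues i • u := by
    have h1 := hH.mulVec_eigenvectorBasis i
    have : u = ⇑(hH.eigenvectorBasis i) := by
      funext k
      rw [hu]
      exact hH.eigenvectorUnitary_apply k i
    rw [this, h1]
  have hray : u ⬝ᵥ H.mulVec u = hH.eigenvalues i := by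
    rw [heig, dotProduct_smul, smul_eq_mul, hnorm, mul_one]
  calc lambdaMin H ≤ u ⬝ᵥ H.mulVec u :=
        ciInf_le (rayleigh_bddBelow H) ⟨u, hnorm⟩
    _ = _ := hray

variable {ρ : ℝ → EReal}

lemma mconj_nonneg (hρ0 : ρ 0 = 0) (u : ℝ) : 0 ≤ mconj ρ u := by
  have h := le_iSup (fun t : {t : ℝ // 0 ≤ t} => (((u * (t : ℝ) : ℝ) : EReal) - ρ t))
    (⟨0, le_refl 0⟩ : {t : ℝ // 0 ≤ t})
  simp [hρ0] at h
  exact h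

lemma mconj_ne_bot (hρ0 : ρ 0 = 0) (u : ℝ) : mconj ρ u ≠ ⊥ :=
  fun h => by simpa [h] using mconj_nonneg hρ0 u

lemma mconj_lt_top (h2 : Assump2 ρ) (hpos : ∀ t, 0 ≤ ρ t) (u : ℝ) : mconj ρ u < ⊤ := by
  obtain ⟨T, hT⟩ := (h2 (u + 1)).exists_forall_of_atTop
  refine lt_of_le_of_lt (b := ((|u| * max T 0 : ℝ) : EReal)) ?_ (EReal.coe_lt_top _)
  refine iSup_le fun ⟨t, ht⟩ => ?_
  simp only
  by_cases hcase : t ≤ max T 0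
  · calc ((u * t : ℝ) : EReal) - ρ t ≤ ((u * t : ℝ) : EReal) - 0 := by
          exact EReal.sub_le_sub le_rfl (hpos t)
      _ = ((u * t : ℝ) : EReal) := by rw [sub_zero]
      _ ≤ ((|u| * max T 0 : ℝ) : EReal) := by
          apply EReal.coe_le_coe_iff.mpr
          calc u * t ≤ |u * t| := le_abs_self _
            _ = |u| * |t| := abs_mul u t
            _ ≤ |u| * max T 0 := by
                apply mul_le_mul_of_nonneg_left _ (abs_nonneg u)
                rw [abs_of_nonneg ht]; exact hcase
  · push_neg at hcase
    have htT : T ≤ t := le_of_lt (lt_of_le_of_lt (le_max_left _ _) hcase)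
    have h3 := hT t htT
    calc ((u * t : ℝ) : EReal) - ρ t ≤ ((u * t : ℝ) : EReal) - (((u+1) * t : ℝ) : EReal) :=
          EReal.sub_le_sub le_rfl h3
      _ = ((u * t - (u+1) * t : ℝ) : EReal) := by rw [← EReal.coe_sub]
      _ ≤ ((|u| * max T 0 : ℝ) : EReal) := by
          apply EReal.coe_le_coe_iff.mpr
          have h4 : u * t - (u+1)*t = -t := by ring
          rw [h4]
          have : (0:ℝ) ≤ |u| * max T 0 := mul_nonneg (abs_nonneg _) (le_max_right _ _)
          have ht0 : (0:ℝ) ≤ t := le_trans (le_max_right T 0) (le_of_lt hcase)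
          linarith

lemma mconj_eq_coe (hρ0 : ρ 0 = 0) (h2 : Assump2 ρ) (hpos : ∀ t, 0 ≤ ρ t) (u : ℝ) :
    mconj ρ u = ((mconjR ρ u : ℝ) : EReal) :=
  (EReal.coe_toReal (mconj_lt_top h2 hpos u).ne (mconj_ne_bot hρ0 u)).symm

lemma le_mconjR (hρ0 : ρ 0 = 0) (h2 : Assump2 ρ) (hpos : ∀ t, 0 ≤ ρ t) (u t : ℝ)
    (ht : 0 ≤ t) (htop : ρ t ≠ ⊤) : u * t - (ρ t).toReal ≤ mconjR ρ u := by
  have h : ((u * t : ℝ) : EReal) - ρ t ≤ mconj ρ u :=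
    le_iSup (fun t : {t : ℝ // 0 ≤ t} => (((u * (t : ℝ) : ℝ) : EReal) - ρ t))
      (⟨t, ht⟩ : {t : ℝ // 0 ≤ t})
  rw [mconj_eq_coe hρ0 h2 hpos] at h
  have hbot : ρ t ≠ ⊥ := fun hb => by simpa [hb] using hpos t
  rw [← EReal.coe_toReal htop hbot, ← EReal.coe_sub, EReal.coe_le_coe_iff] at h
  exact h

lemma mconjR_le (hρ0 : ρ 0 = 0) (h2 : Assump2 ρ) (hpos : ∀ t, 0 ≤ ρ t) (u X : ℝ)
    (hX : ∀ t : ℝ, 0 ≤ t → ρ t ≠ ⊤ → u * t - (ρ t).toReal ≤ X) : mconjR ρ u ≤ X := by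
  have h : mconj ρ u ≤ ((X : ℝ) : EReal) := by
    refine iSup_le fun ⟨t, ht⟩ => ?_
    simp only
    by_cases htop : ρ t = ⊤
    · rw [htop]
      simp [EReal.sub_top]
    · have hbot : ρ t ≠ ⊥ := fun hb => by simpa [hb] using hpos t
      rw [← EReal.coe_toReal htop hbot, ← EReal.coe_sub]
      exact EReal.coe_le_coe_iff.mpr (hX t ht htop)
  rw [mconj_eq_coe hρ0 h2 hpos] at h
  exact EReal.coe_le_coe_iff.mp h

lemma mconjR_convex (hρ0 : ρ 0 = 0) (h2 : Assump2 ρ) (hpos : ∀ t, 0 ≤ ρ t) :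
    ConvexOn ℝ Set.univ (mconjR ρ) := by
  refine ⟨convex_univ, fun x _ y _ a b ha hb hab => ?_⟩
  apply mconjR_le hρ0 h2 hpos
  intro t ht htop
  have e1 := le_mconjR hρ0 h2 hpos x t ht htop
  have e2 := le_mconjR hρ0 h2 hpos y t ht htop
  have e1' := mul_le_mul_of_nonneg_left e1 ha
  have e2' := mul_le_mul_of_nonneg_left e2 hb
  simp only [smul_eq_mul]
  have hb1 : b = 1 - a := by linarith
  have key : (a*x+b*y)*t - (ρ t).toReal
      = a*(x*t-(ρ t).toReal) + b*(y*t-(ρ t).toReal) := by rw [hb1]; ring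
  rw [key]
  exact add_le_add e1' e2'

lemma deriv_contAt {f : ℝ → ℝ} (hconv : ConvexOn ℝ Set.univ f)
    (hdiff : ∀ u : ℝ, 0 < u → DifferentiableAt ℝ f u) {a : ℝ} (ha : 0 < a) :
    ContinuousAt (deriv f) a := by
  have hmono : MonotoneOn (deriv f) (Ioi 0) :=
    ConvexOn.monotoneOn_deriv (hconv.subset (subset_univ _) (convex_Ioi 0))
      (fun x hx => hdiff x hx)
  have hfc : ∀ x : ℝ, 0 < x → ContinuousAt f x := fun x hx => (hdiff x hx).continuousAt
  have hslope : Tendsto (slope f a) (𝓝[≠] a) (𝓝 (deriv f a)) :=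
    hasDerivAt_iff_tendsto_slope.mp (hdiff a ha).hasDerivAt
  rw [continuousAt_iff_continuous_left_right]
  constructor
  · rw [ContinuousWithinAt]
    refine tendsto_order.2 ⟨fun b hb => ?_, fun b hb => ?_⟩
    · have h1 : Tendsto (slope f a) (𝓝[<] a) (𝓝 (deriv f a)) :=
        hslope.mono_left (nhdsWithin_mono a fun x hx => ne_of_lt hx)
      have h2 : ∀ᶠ x in 𝓝[<] a, b < slope f a x := h1.eventually (eventually_gt_nhds hb)
      have h3 : ∀ᶠ x in 𝓝[<] a, 0 < x := eventually_nhdsWithin_of_eventually_nhds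
        (eventually_gt_nhds ha)
      obtain ⟨u, ⟨hub, hu0⟩, hua⟩ := ((h2.and h3).and self_mem_nhdsWithin).exists
      have hcont : ContinuousAt (fun x => slope f u x) a := by
        have : ContinuousAt (fun x => (f x - f u) / (x - u)) a := by
          apply ContinuousAt.div
          · exact (hfc a ha).sub continuousAt_const
          · exact continuousAt_id.sub continuousAt_const
          · exact sub_ne_zero.mpr (ne_of_gt hua)
        refine this.congr (Eventually.mono (eventually_ne_nhds (ne_of_gt hua)) fun x hx => ?_)
        simp only [slope_def_field]
      have hval : b < slope f u a := by
        rwa [slope_comm] at hub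
      have h4 : ∀ᶠ x in 𝓝 a, b < slope f u x := hcont.eventually (eventually_gt_nhds hval)
      have h5 : ∀ᶠ x in 𝓝 a, u < x := eventually_gt_nhds hua
      filter_upwards [eventually_nhdsWithin_of_eventually_nhds (h4.and h5),
        self_mem_nhdsWithin] with x hx _
      calc b < slope f u x := hx.1
        _ ≤ deriv f x := hconv.slope_le_deriv (mem_univ u) (mem_univ x) hx.2
            (hdiff x (lt_trans hu0 hx.2))
    · have h3 : ∀ᶠ x in 𝓝[≤] a, 0 < x := eventually_nhdsWithin_of_eventually_nhds
        (eventually_gt_nhds ha)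
      filter_upwards [h3, self_mem_nhdsWithin] with x hx0 hxa
      exact lt_of_le_of_lt (hmono hx0 ha hxa) hb
  · rw [ContinuousWithinAt]
    refine tendsto_order.2 ⟨fun b hb => ?_, fun b hb => ?_⟩
    · filter_upwards [self_mem_nhdsWithin] with x hxa
      exact lt_of_lt_of_le hb (hmono ha (lt_of_lt_of_le ha hxa) hxa)
    · have h1 : Tendsto (slope f a) (𝓝[>] a) (𝓝 (deriv f a)) :=
        hslope.mono_left (nhdsWithin_mono a fun x hx => ne_of_gt hx)
      have h2 : ∀ᶠ x in 𝓝[>] a, slope f a x < b := h1.eventually (eventually_lt_nhds hb)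
      obtain ⟨v, hvb, hva⟩ := (h2.and self_mem_nhdsWithin).exists
      have hcont : ContinuousAt (fun x => slope f x v) a := by
        have : ContinuousAt (fun x => (f v - f x) / (v - x)) a := by
          apply ContinuousAt.div
          · exact continuousAt_const.sub (hfc a ha)
          · exact continuousAt_const.sub continuousAt_id
          · exact sub_ne_zero.mpr (ne_of_gt hva)
        refine this.congr (Eventually.mono (eventually_ne_nhds (ne_of_lt hva)) fun x hx => ?_)
        simp only [slope_def_field]
      have hval : slope f a v < b := hvb
      have h4 : ∀ᶠ x in 𝓝 a, slope f x v < b := hcont.eventually (eventually_lt_nhds hval)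
      have h5 : ∀ᶠ x in 𝓝 a, x < v := eventually_lt_nhds hva
      have h6 : ∀ᶠ x in 𝓝 a, 0 < x := eventually_gt_nhds ha
      filter_upwards [eventually_nhdsWithin_of_eventually_nhds ((h4.and h5).and h6)] with x hx
      calc deriv f x ≤ slope f x v := hconv.deriv_le_slope (mem_univ x) (mem_univ v) hx.1.2
            (hdiff x hx.2)
        _ < b := hx.1.1

lemma exists_deriv_pos {f : ℝ → ℝ} (hconv : ConvexOn ℝ Set.univ f)
    (hdiff : ∀ u : ℝ, 0 < u → DifferentiableAt ℝ f u) {t₀ r₀ : ℝ} (ht₀ : 0 < t₀)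
    (hgrow : ∀ u : ℝ, u * t₀ - r₀ ≤ f u) : ∃ u₁ : ℝ, 1 < u₁ ∧ 0 < deriv f u₁ := by
  set v := max 2 ((r₀ + f 1 + 1) / t₀) with hv
  have hv2 : (2:ℝ) ≤ v := le_max_left _ _
  have hv1 : (1:ℝ) < v := by linarith
  have hvt : r₀ + f 1 + 1 ≤ v * t₀ := by
    have h1 : (r₀ + f 1 + 1) / t₀ ≤ v := le_max_right _ _
    calc r₀ + f 1 + 1 = ((r₀ + f 1 + 1) / t₀) * t₀ := by field_simp
      _ ≤ v * t₀ := mul_le_mul_of_nonneg_right h1 ht₀.le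
  have hfv : f 1 + 1 ≤ f v := by have := hgrow v; linarith
  have hslope : (0:ℝ) < slope f 1 v := by
    rw [slope_def_field]
    apply div_pos (by linarith) (by linarith)
  have hle := hconv.slope_le_deriv (mem_univ (1:ℝ)) (mem_univ v) hv1 (hdiff v (by linarith))
  exact ⟨v, hv1, lt_of_lt_of_le hslope hle⟩

end Stmt7Aux


theorem stmt7 {n : ℕ} (g : Fin n → ℝ) (hg : g ≠ 0)
    (H : Matrix (Fin n) (Fin n) ℝ) (hH : H.IsSymm)
    (ρ : ℝ → EReal) (hρ : RhoBasic ρ) (h1 : Assump1 ρ) (h2 : Assump2 ρ) (h3 : Assump3 ρ)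
    (lt : ℝ) (hlt : lt = min 0 (lambdaMin H)) (f : ℝ → ℝ)
    (hf : f = fun l =>
      nsq (((H - l • (1 : Matrix (Fin n) (Fin n) ℝ))⁻¹).mulVec g) - deriv (mconjR ρ) (-l)) :
    ContinuousOn f (Iio lt) ∧ StrictMonoOn f (Iio lt) ∧
      Filter.limsup (fun l : ℝ => ((f l : ℝ) : EReal)) atBot < 0 ∧
      (Filter.Tendsto (fun l : ℝ => nsq (((H - l • (1 : Matrix (Fin n) (Fin n) ℝ))⁻¹).mulVec g))
          (nhdsWithin lt (Iio lt)) atTop →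
        ∃! l : ℝ, l ∈ Iio lt ∧
          nsq (((H - l • (1 : Matrix (Fin n) (Fin n) ℝ))⁻¹).mulVec g) = deriv (mconjR ρ) (-l)) := by
  obtain ⟨hρpos, hρ0, _, _⟩ := hρ
  obtain ⟨hmonoρ, hzero, t₀, ht₀pos, ht₀top⟩ := h1
  have hH' : H.IsHermitian := by
    rw [Matrix.IsHermitian, Matrix.conjTranspose_eq_transpose_of_trivial]; exact hH
  set μ := hH'.eigenvalues with hμ
  set c := (star (hH'.eigenvectorUnitary : Matrix (Fin n) (Fin n) ℝ)).mulVec g with hcdef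
  set F : ℝ → ℝ := fun l => ∑ i, (c i)^2 * ((μ i - l)^2)⁻¹ with hF
  set d : ℝ → ℝ := deriv (mconjR ρ) with hd
  have hlt0 : lt ≤ 0 := hlt ▸ min_le_left _ _
  have hltμ : ∀ i, lt ≤ μ i := fun i =>
    le_trans (hlt ▸ min_le_right _ _) (Stmt7Aux.lambdaMin_le_eigenvalues hH' i)
  have hpos : ∀ l, l < lt → ∀ i, 0 < μ i - l := fun l hl i => by
    have := hltμ i; linarith
  have hfF : ∀ l ∈ Iio lt, f l = F l - d (-l) := by
    intro l hl
    rw [hf]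
    simp only
    rw [Stmt7Aux.nsq_formula hH' g l (fun i => ne_of_gt (hpos l hl i))]
  -- conjugate facts
  have hconv := Stmt7Aux.mconjR_convex hρ0 h2 hρpos
  have hdmono : MonotoneOn d (Ioi 0) :=
    ConvexOn.monotoneOn_deriv (hconv.subset (subset_univ _) (convex_Ioi 0))
      (fun x hx => h3 x hx)
  have hdcont : ∀ a : ℝ, 0 < a → ContinuousAt d a :=
    fun a ha => Stmt7Aux.deriv_contAt hconv h3 ha
  have hgrow : ∀ u : ℝ, u * t₀ - (ρ t₀).toReal ≤ mconjR ρ u :=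
    fun u => Stmt7Aux.le_mconjR hρ0 h2 hρpos u t₀ ht₀pos.le ht₀top.ne
  obtain ⟨u₁, hu₁1, hu₁pos⟩ := Stmt7Aux.exists_deriv_pos hconv h3 ht₀pos hgrow
  -- c is nonzero
  have hcne : ∃ i, c i ≠ 0 := by
    by_contra hcon
    push_neg at hcon
    apply hg
    have hUU : (hH'.eigenvectorUnitary : Matrix (Fin n) (Fin n) ℝ)
        * star (hH'.eigenvectorUnitary : Matrix (Fin n) (Fin n) ℝ) = 1 :=
      Matrix.mem_unitaryGroup_iff.mp hH'.eigenvectorUnitary.2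
    have hgc : (hH'.eigenvectorUnitary : Matrix (Fin n) (Fin n) ℝ).mulVec c = g := by
      rw [hcdef, Matrix.mulVec_mulVec, hUU, Matrix.one_mulVec]
    have hc0 : c = 0 := funext hcon
    rw [← hgc, hc0, Matrix.mulVec_zero]
  -- continuity of f
  have hFcont : ContinuousOn F (Iio lt) := by
    rw [hF]
    apply continuousOn_finset_sum
    intro i _
    apply ContinuousOn.mul continuousOn_const
    apply ContinuousOn.inv₀
    · exact (continuousOn_const.sub continuousOn_id).pow 2
    · intro l hl; exact pow_ne_zero 2 (ne_of_gt (hpos l hl i))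
  have hcont : ContinuousOn f (Iio lt) := by
    refine ContinuousOn.congr (f := fun l => F l - d (-l)) ?_ (fun l hl => hfF l hl)
    apply hFcont.sub
    apply continuousOn_of_forall_continuousAt
    intro l hl
    have hl' : l < lt := hl
    exact (hdcont (-l) (by linarith)).comp (continuous_neg.continuousAt)
  -- strict monotonicity
  have hsm : StrictMonoOn f (Iio lt) := by
    intro l₁ h₁ l₂ h₂ h12
    have hl₁ : l₁ < lt := h₁
    have hl₂ : l₂ < lt := h₂
    rw [hfF l₁ h₁, hfF l₂ h₂]
    have hFlt : F l₁ < F l₂ := by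
      rw [hF]
      simp only
      obtain ⟨i₀, hi₀⟩ := hcne
      apply Finset.sum_lt_sum
      · intro i _
        apply mul_le_mul_of_nonneg_left _ (sq_nonneg _)
        apply inv_anti₀ (pow_pos (hpos l₂ h₂ i) 2)
        apply pow_le_pow_left₀ (hpos l₂ h₂ i).le (by linarith) 2
      · refine ⟨i₀, Finset.mem_univ _, ?_⟩
        apply mul_lt_mul_of_pos_left _
          (lt_of_le_of_ne (sq_nonneg _) (Ne.symm (pow_ne_zero 2 hi₀)))
        apply inv_strictAnti₀ (pow_pos (hpos l₂ h₂ i₀) 2)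
        apply pow_lt_pow_left₀ (by linarith) (hpos l₂ h₂ i₀).le (by norm_num)
    have hd12 : d (-l₂) ≤ d (-l₁) :=
      hdmono (mem_Ioi.mpr (by linarith)) (mem_Ioi.mpr (by linarith)) (by linarith)
    linarith
  -- limsup
  set ε := d u₁ with hεdef
  have hεpos : 0 < ε := hu₁pos
  have hev1 : ∀ᶠ l : ℝ in atBot, ε ≤ d (-l) := by
    filter_upwards [eventually_le_atBot (-u₁)] with l hl
    exact hdmono (mem_Ioi.mpr (by linarith)) (mem_Ioi.mpr (by linarith)) (by linarith)
  have hFtend : Tendsto F atBot (𝓝 0) := by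
    rw [hF]
    have hterm : ∀ i : Fin n, Tendsto (fun l : ℝ => (c i)^2 * ((μ i - l)^2)⁻¹) atBot (𝓝 0) := by
      intro i
      have h1 : Tendsto (fun l : ℝ => μ i - l) atBot atTop := by
        simp only [sub_eq_add_neg]
        exact tendsto_atTop_add_const_left _ _ tendsto_neg_atBot_atTop
      have h2 : Tendsto (fun l : ℝ => (μ i - l)^2) atBot atTop :=
        (tendsto_pow_atTop (two_ne_zero)).comp h1
      have h3 : Tendsto (fun l : ℝ => ((μ i - l)^2)⁻¹) atBot (𝓝 0) :=
        tendsto_inv_atTop_zero.comp h2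
      have := h3.const_mul ((c i)^2)
      simpa using this
    have := tendsto_finset_sum (Finset.univ : Finset (Fin n)) (fun i _ => hterm i)
    simpa using this
  have hevf : ∀ᶠ l : ℝ in atBot, f l ≤ -(ε/2) := by
    filter_upwards [hev1, hFtend.eventually (eventually_lt_nhds (half_pos hεpos)),
      eventually_lt_atBot lt] with l hd1 hF1 hllt
    rw [hfF l hllt]
    linarith
  have hlimsup : Filter.limsup (fun l : ℝ => ((f l : ℝ) : EReal)) atBot < 0 := by
    have hle : Filter.limsup (fun l : ℝ => ((f l : ℝ) : EReal)) atBot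
        ≤ ((-(ε/2) : ℝ) : EReal) := by
      refine Filter.limsup_le_of_le (by isBoundedDefault) ?_
      filter_upwards [hevf] with l hl
      exact EReal.coe_le_coe_iff.mpr hl
    refine lt_of_le_of_lt hle ?_
    have h0 : ((-(ε/2) : ℝ) : EReal) < ((0:ℝ) : EReal) :=
      EReal.coe_lt_coe_iff.mpr (by linarith)
    simpa using h0
  refine ⟨hcont, hsm, hlimsup, ?_⟩
  -- existence and uniqueness
  intro htend
  set C := d (1 - lt) with hCdef
  have hbound : ∀ l : ℝ, lt - 1 < l → l < lt → d (-l) ≤ C :=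
    fun l hl1 hl2 => hdmono (mem_Ioi.mpr (by linarith)) (mem_Ioi.mpr (by linarith)) (by linarith)
  obtain ⟨a, ha1, ha2⟩ := (hevf.and (eventually_lt_atBot lt)).exists
  have hfa : f a < 0 := lt_of_le_of_lt ha1 (by linarith)
  have hev2 : ∀ᶠ l in 𝓝[<] lt,
      C + 1 ≤ nsq (((H - l • (1 : Matrix (Fin n) (Fin n) ℝ))⁻¹).mulVec g) :=
    htend.eventually (eventually_ge_atTop (C+1))
  have hmaxlt : max a (lt - 1) < lt := max_lt ha2 (by linarith)
  have hev3 : ∀ᶠ l in 𝓝[<] lt, max a (lt - 1) < l :=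
    eventually_nhdsWithin_of_eventually_nhds (eventually_gt_nhds hmaxlt)
  obtain ⟨b, ⟨hb2, hb3⟩, hb1⟩ := ((hev2.and hev3).and self_mem_nhdsWithin).exists
  have hblt : b < lt := hb1
  have hab : a < b := lt_of_le_of_lt (le_max_left _ _) hb3
  have hfb : 0 < f b := by
    have h4 := hbound b (lt_of_le_of_lt (le_max_right a (lt-1)) hb3) hblt
    have h5 : f b = nsq (((H - b • (1 : Matrix (Fin n) (Fin n) ℝ))⁻¹).mulVec g) - d (-b) := by
      rw [hf]
    rw [h5]
    linarith
  have hicc : Icc a b ⊆ Iio lt := fun x hx => lt_of_le_of_lt hx.2 hblt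
  have hIVT := intermediate_value_Icc hab.le (hcont.mono hicc)
  have h0mem : (0:ℝ) ∈ Icc (f a) (f b) := ⟨hfa.le, hfb.le⟩
  obtain ⟨l₀, hl₀mem, hl₀⟩ := hIVT h0mem
  have hl₀lt : l₀ ∈ Iio lt := hicc hl₀mem
  have hfiff : ∀ y : ℝ, (nsq (((H - y • (1 : Matrix (Fin n) (Fin n) ℝ))⁻¹).mulVec g)
      = deriv (mconjR ρ) (-y)) ↔ f y = 0 := by
    intro y
    rw [hf]
    simp only [hd]
    constructor
    · intro h; rw [h]; ring
    · intro h; linarith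
  refine ⟨l₀, ⟨hl₀lt, (hfiff l₀).mpr hl₀⟩, ?_⟩
  rintro y ⟨hy1, hy2⟩
  have hfy : f y = 0 := (hfiff y).mp hy2
  exact hsm.injOn hy1 hl₀lt (by rw [hfy, hl₀])


end
end

section
/- Let g ∈ ℝⁿ \ {0}, let H be a symmetric n×n real matrix, and set λ̃ := min{0, λ_min(H)}. Then lim_{λ↑λ̃} ‖(H − λI)⁻¹g‖² = ∞ if and only if λ_min(H) ≤ 0 and g ∉ Range(H − λ̃I). -/
open Matrix Filter Set Topology

noncomputable section

lemma dot_transpose_mulVec {m : Type*} [Fintype m] (A : Matrix m m ℝ) (v w : m → ℝ) :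
    v ⬝ᵥ (Aᵀ *ᵥ w) = (A *ᵥ v) ⬝ᵥ w := by
  rw [Matrix.dotProduct_mulVec, Matrix.vecMul_transpose]

lemma dot_mulVec_left {m : Type*} [Fintype m] (A : Matrix m m ℝ) (v w : m → ℝ) :
    v ⬝ᵥ (A *ᵥ w) = (Aᵀ *ᵥ v) ⬝ᵥ w := by
  rw [← Matrix.transpose_transpose A, dot_transpose_mulVec, Matrix.transpose_transpose]

lemma nsq_mulVec_of {m : Type*} [Fintype m] [DecidableEq m] (A : Matrix m m ℝ)
    (h : Aᵀ * A = 1) (v : m → ℝ) : nsq (A *ᵥ v) = nsq v := by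
  unfold nsq
  rw [← dot_transpose_mulVec, Matrix.mulVec_mulVec, h, Matrix.one_mulVec]

theorem stmt8 {n : ℕ} (g : Fin n → ℝ) (hg : g ≠ 0)
    (H : Matrix (Fin n) (Fin n) ℝ) (hH : H.IsSymm)
    (lt : ℝ) (hlt : lt = min 0 (lambdaMin H)) :
    Filter.Tendsto (fun l : ℝ => nsq (((H - l • (1 : Matrix (Fin n) (Fin n) ℝ))⁻¹).mulVec g))
        (nhdsWithin lt (Iio lt)) atTop ↔
      (lambdaMin H ≤ 0 ∧
        ¬∃ y : Fin n → ℝ, (H - lt • (1 : Matrix (Fin n) (Fin n) ℝ)).mulVec y = g) := by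
  classical
  have hn : Nonempty (Fin n) := by
    rcases n with _ | n
    · exact absurd (funext fun i => i.elim0) hg
    · exact ⟨0⟩
  have hherm : H.IsHermitian := by
    rw [Matrix.IsHermitian, Matrix.conjTranspose_eq_transpose_of_trivial]; exact hH
  set U : Matrix (Fin n) (Fin n) ℝ := (hherm.eigenvectorUnitary : Matrix (Fin n) (Fin n) ℝ)
    with hU
  set μ : Fin n → ℝ := hherm.eigenvalues with hμdef
  have hspec : H = U * Matrix.diagonal μ * Uᵀ := by
    have := hherm.spectral_theorem
    rw [Unitary.conjStarAlgAut_apply, Matrix.star_eq_conjTranspose, Matrix.conjTranspose_eq_transpose_of_trivial] at this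
    exact this
  have hUtU : Uᵀ * U = 1 := by
    have := Matrix.mem_unitaryGroup_iff'.mp hherm.eigenvectorUnitary.2
    rwa [Matrix.star_eq_conjTranspose, Matrix.conjTranspose_eq_transpose_of_trivial] at this
  have hUUt : U * Uᵀ = 1 := by
    have := Matrix.mem_unitaryGroup_iff.mp hherm.eigenvectorUnitary.2
    rwa [Matrix.star_eq_conjTranspose, Matrix.conjTranspose_eq_transpose_of_trivial] at this
  set c : Fin n → ℝ := Uᵀ *ᵥ g with hc
  have hgc : g = U *ᵥ c := by
    rw [hc, Matrix.mulVec_mulVec, hUUt, Matrix.one_mulVec]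
  -- diagonalization of H - l • 1
  have hdiag : ∀ l : ℝ, H - l • (1 : Matrix (Fin n) (Fin n) ℝ) =
      U * Matrix.diagonal (fun i => μ i - l) * Uᵀ := by
    intro l
    have h1 : Matrix.diagonal (fun i => μ i - l) =
        Matrix.diagonal μ - l • (1 : Matrix (Fin n) (Fin n) ℝ) := by
      ext i j
      by_cases h : i = j <;> simp [Matrix.diagonal_apply, Matrix.one_apply, h]
    have h2 : U * (l • (1 : Matrix (Fin n) (Fin n) ℝ)) * Uᵀ =
        l • (1 : Matrix (Fin n) (Fin n) ℝ) := by
      rw [mul_smul_comm, mul_one, smul_mul_assoc, hUUt]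
    rw [h1, mul_sub, sub_mul, h2, ← hspec]
  -- Rayleigh expansion
  have hray : ∀ x : Fin n → ℝ, x ⬝ᵥ H *ᵥ x = ∑ i, μ i * ((Uᵀ *ᵥ x) i) ^ 2 := by
    intro x
    have h0 : H *ᵥ x = U *ᵥ (Matrix.diagonal μ *ᵥ (Uᵀ *ᵥ x)) := by
      rw [hspec, Matrix.mulVec_mulVec, Matrix.mulVec_mulVec]
    rw [h0, dot_mulVec_left]
    simp only [dotProduct, Matrix.mulVec_diagonal]
    exact Finset.sum_congr rfl fun i _ => by ring
  -- squared-sum of coordinates equals nsq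
  have hnsq_coord : ∀ x : Fin n → ℝ, ∑ i, ((Uᵀ *ᵥ x) i) ^ 2 = nsq x := by
    intro x
    have h0 := nsq_mulVec_of Uᵀ (by rw [Matrix.transpose_transpose]; exact hUUt) x
    rw [← h0]
    unfold nsq
    simp only [dotProduct]
    exact Finset.sum_congr rfl fun i _ => (sq _)
  -- lambdaMin H ≤ μ i for each i
  have hlam_le : ∀ i, lambdaMin H ≤ μ i := by
    intro i
    have hbdd : BddBelow (Set.range fun x : {x : Fin n → ℝ // x ⬝ᵥ x = 1} =>
        ((x : Fin n → ℝ) ⬝ᵥ H.mulVec (x : Fin n → ℝ))) := by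
      refine ⟨Finset.univ.inf' Finset.univ_nonempty μ, ?_⟩
      rintro r ⟨⟨x, hx⟩, rfl⟩
      have h1 : (x ⬝ᵥ H *ᵥ x) = ∑ j, μ j * ((Uᵀ *ᵥ x) j) ^ 2 := hray x
      have h2 : ∑ j, ((Uᵀ *ᵥ x) j) ^ 2 = 1 := by rw [hnsq_coord]; exact hx
      simp only
      rw [h1]
      calc Finset.univ.inf' Finset.univ_nonempty μ
          = Finset.univ.inf' Finset.univ_nonempty μ * ∑ j, ((Uᵀ *ᵥ x) j) ^ 2 := by
            rw [h2, mul_one]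
        _ = ∑ j, Finset.univ.inf' Finset.univ_nonempty μ * ((Uᵀ *ᵥ x) j) ^ 2 := by
            rw [Finset.mul_sum]
        _ ≤ ∑ j, μ j * ((Uᵀ *ᵥ x) j) ^ 2 :=
            Finset.sum_le_sum fun j _ =>
              mul_le_mul_of_nonneg_right (Finset.inf'_le _ (Finset.mem_univ j)) (sq_nonneg _)
    set v : Fin n → ℝ := fun j => U j i with hv
    have hcol : Uᵀ *ᵥ v = Pi.single i 1 := by
      funext k
      have h3 : (Uᵀ *ᵥ v) k = (Uᵀ * U) k i := by
        simp [Matrix.mulVec, dotProduct, Matrix.mul_apply, hv]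
      rw [h3, hUtU]
      by_cases h : k = i <;> simp [Matrix.one_apply, h, Pi.single_apply]
    have hvunit : v ⬝ᵥ v = 1 := by
      have h2 := hnsq_coord v
      rw [hcol] at h2
      have h3 : ∑ j, ((Pi.single i 1 : Fin n → ℝ) j) ^ 2 = 1 := by
        simp [Pi.single_apply]
      rw [h3] at h2
      unfold nsq at h2
      exact h2.symm
    have hrv : v ⬝ᵥ H *ᵥ v = μ i := by
      rw [hray v, hcol]
      simp [Pi.single_apply]
    have h4 := ciInf_le hbdd (⟨v, hvunit⟩ : {x : Fin n → ℝ // x ⬝ᵥ x = 1})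
    rw [hrv] at h4
    exact h4
  have hlt_le : ∀ i, lt ≤ μ i := fun i =>
    hlt ▸ le_trans (min_le_right _ _) (hlam_le i)
  -- formula for nsq of inverse
  set f : ℝ → ℝ := fun l => ∑ i, ((μ i - l)⁻¹ * c i) ^ 2 with hf
  have heq : ∀ l ∈ Iio lt, nsq ((H - l • (1 : Matrix (Fin n) (Fin n) ℝ))⁻¹ *ᵥ g) = f l := by
    intro l hl
    have hpos : ∀ i, (0:ℝ) < μ i - l := fun i => by
      have := hlt_le i; simp only [mem_Iio] at hl; linarith
    set M : Matrix (Fin n) (Fin n) ℝ :=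
      U * Matrix.diagonal (fun i => (μ i - l)⁻¹) * Uᵀ with hM
    have hAM : (H - l • (1 : Matrix (Fin n) (Fin n) ℝ)) * M = 1 := by
      rw [hdiag l, hM]
      calc U * Matrix.diagonal (fun i => μ i - l) * Uᵀ *
            (U * Matrix.diagonal (fun i => (μ i - l)⁻¹) * Uᵀ)
          = U * (Matrix.diagonal (fun i => μ i - l) * ((Uᵀ * U) *
            (Matrix.diagonal (fun i => (μ i - l)⁻¹) * Uᵀ))) := by
            simp only [mul_assoc]
        _ = U * (Matrix.diagonal (fun i => μ i - l) *
            Matrix.diagonal (fun i => (μ i - l)⁻¹)) * Uᵀ := by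
            rw [hUtU, one_mul]; simp only [mul_assoc]
        _ = 1 := by
            rw [Matrix.diagonal_mul_diagonal]
            have h5 : (fun i => (μ i - l) * (μ i - l)⁻¹) = fun _ => (1:ℝ) :=
              funext fun i => mul_inv_cancel₀ (hpos i).ne'
            rw [h5, Matrix.diagonal_one, mul_one, hUUt]
    have hinv : (H - l • (1 : Matrix (Fin n) (Fin n) ℝ))⁻¹ = M :=
      Matrix.inv_eq_right_inv hAM
    have h6 : M *ᵥ g = U *ᵥ (Matrix.diagonal (fun i => (μ i - l)⁻¹) *ᵥ c) := by
      rw [hM, hc, Matrix.mulVec_mulVec, Matrix.mulVec_mulVec]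
    rw [hinv, h6, nsq_mulVec_of U hUtU]
    unfold nsq
    simp only [dotProduct, Matrix.mulVec_diagonal, hf]
    exact Finset.sum_congr rfl fun i _ => (sq _).symm
  have heqev : (fun l : ℝ => nsq (((H - l • (1 : Matrix (Fin n) (Fin n) ℝ))⁻¹).mulVec g))
      =ᶠ[𝓝[<] lt] f := by
    filter_upwards [self_mem_nhdsWithin] with l hl
    exact heq l hl
  -- ¬P → in range
  have hnotP_range : (∀ i, μ i = lt → c i = 0) → ∃ y : Fin n → ℝ,
      (H - lt • (1 : Matrix (Fin n) (Fin n) ℝ)).mulVec y = g := by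
    intro hp
    set w : Fin n → ℝ := fun i => if μ i = lt then 0 else (μ i - lt)⁻¹ * c i with hw
    refine ⟨U *ᵥ w, ?_⟩
    have h1 : (H - lt • (1 : Matrix (Fin n) (Fin n) ℝ)) *ᵥ (U *ᵥ w) =
        U *ᵥ (Matrix.diagonal (fun i => μ i - lt) *ᵥ w) := by
      rw [hdiag lt, Matrix.mulVec_mulVec, Matrix.mulVec_mulVec]
      rw [mul_assoc, hUtU, mul_one]
    have h2 : Matrix.diagonal (fun i => μ i - lt) *ᵥ w = c := by
      funext i
      rw [Matrix.mulVec_diagonal]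
      by_cases h : μ i = lt
      · simp [hw, h, hp i h]
      · have hne : μ i - lt ≠ 0 := sub_ne_zero.2 h
        simp only [hw, if_neg h]
        field_simp
      -- done
    rw [h1, h2, ← hgc]
  -- range → ¬P
  have hrange_notP : (∃ y : Fin n → ℝ,
      (H - lt • (1 : Matrix (Fin n) (Fin n) ℝ)).mulVec y = g) →
      ∀ i, μ i = lt → c i = 0 := by
    rintro ⟨y, hy⟩ i hmi
    have h1 : c = Matrix.diagonal (fun i => μ i - lt) *ᵥ (Uᵀ *ᵥ y) := by
      rw [hc, ← hy, hdiag lt, Matrix.mulVec_mulVec, Matrix.mulVec_mulVec]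
      rw [← mul_assoc, ← mul_assoc, hUtU, one_mul]
    rw [h1]
    rw [Matrix.mulVec_diagonal, hmi, sub_self, zero_mul]
  -- tendsto to finite limit when ¬P
  have hB : (∀ i, μ i = lt → c i = 0) → Tendsto f (𝓝[<] lt) (𝓝 (f lt)) := by
    intro hp
    apply tendsto_finset_sum
    intro i _
    by_cases hci : c i = 0
    · simp only [hci, mul_zero, ne_eq, OfNat.ofNat_ne_zero, not_false_eq_true, zero_pow]
      exact tendsto_const_nhds
    · have hne : μ i - lt ≠ 0 := sub_ne_zero.2 fun h => hci (hp i h)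
      have hcont : ContinuousAt (fun l : ℝ => ((μ i - l)⁻¹ * c i) ^ 2) lt := by
        apply ContinuousAt.pow
        apply ContinuousAt.mul _ continuousAt_const
        exact ((continuous_const.sub continuous_id).continuousAt).inv₀ hne
      exact hcont.tendsto.mono_left nhdsWithin_le_nhds
  -- tendsto atTop when P
  have hAt : (∃ i, μ i = lt ∧ c i ≠ 0) → Tendsto f (𝓝[<] lt) atTop := by
    rintro ⟨i, hmi, hci⟩
    have h1 : Tendsto (fun l : ℝ => lt - l) (𝓝[<] lt) (𝓝[>] (0:ℝ)) := by
      rw [tendsto_nhdsWithin_iff]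
      constructor
      · exact ((continuous_const.sub continuous_id).tendsto' lt 0 (by simp)).mono_left
          nhdsWithin_le_nhds
      · filter_upwards [self_mem_nhdsWithin] with l hl
        simpa [mem_Ioi, sub_pos] using hl
    have h2 : Tendsto (fun l : ℝ => (lt - l)⁻¹) (𝓝[<] lt) atTop :=
      tendsto_inv_nhdsGT_zero.comp h1
    have h3 : Tendsto (fun l : ℝ => ((μ i - l)⁻¹ * c i) ^ 2) (𝓝[<] lt) atTop := by
      have h4 := (h2.atTop_mul_atTop₀ h2).const_mul_atTop
        (show (0:ℝ) < c i ^ 2 by positivity)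
      refine h4.congr fun l => ?_
      rw [hmi]
      ring
    refine tendsto_atTop_mono (fun l => ?_) h3
    exact Finset.single_le_sum (f := fun j => ((μ j - l)⁻¹ * c j) ^ 2)
      (fun j _ => sq_nonneg _) (Finset.mem_univ i)
  constructor
  · intro htend
    have hftop : Tendsto f (𝓝[<] lt) atTop := htend.congr' heqev
    have hp : ∃ i, μ i = lt ∧ c i ≠ 0 := by
      by_contra hp
      push_neg at hp
      exact not_tendsto_atTop_of_tendsto_nhds (hB hp) hftop
    obtain ⟨i, hmi, hci⟩ := hp
    constructor
    · by_contra h0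
      push_neg at h0
      have hlt0 : lt = 0 := by rw [hlt, min_eq_left h0.le]
      have h5 := hlam_le i
      rw [hmi, hlt0] at h5
      linarith
    · intro hr
      exact hci (hrange_notP hr i hmi)
  · rintro ⟨-, hnr⟩
    have hp : ∃ i, μ i = lt ∧ c i ≠ 0 := by
      by_contra hp
      push_neg at hp
      exact hnr (hnotP_range hp)
    exact (hAt hp).congr' heqev.symm

end
end

section
/- Let g ∈ ℝⁿ \ {0}, let H be a symmetric n×n real positive definite matrix, and let ρ: ℝ → [0,∞] be a proper closed convex function with ρ(0) = 0 satisfying Assumptions 1–3. If ‖H⁻¹g‖² ∈ argmin ρ, then x* = −H⁻¹g minimizes x ↦ 2gᵀx + xᵀHx + ρ(‖x‖²). Otherwise, there exists a unique λ* < 0 such that ‖(H − λ*I)⁻¹g‖² = (ρ⁺)'(−λ*), and x* = −(H − λ*I)⁻¹g minimizes x ↦ 2gᵀx + xᵀHx + ρ(‖x‖²). -/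
open Matrix Filter Set Topology

noncomputable section

set_option maxHeartbeats 1000000

section matrixAux
variable {n : ℕ}

lemma star_eq_self (x : Fin n → ℝ) : star x = x := by
  funext i; simp

lemma posdef_shift {H : Matrix (Fin n) (Fin n) ℝ} (hpd : H.PosDef) {l : ℝ} (hl : l ≤ 0) :
    (H - l • (1 : Matrix (Fin n) (Fin n) ℝ)).PosDef := by
  rw [posDef_iff_dotProduct_mulVec]
  constructor
  · show (H - l • (1 : Matrix (Fin n) (Fin n) ℝ))ᴴ = _
    rw [conjTranspose_sub, conjTranspose_smul, conjTranspose_one, hpd.1.eq, star_trivial]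
  · intro x hx
    have h1 : (H - l • (1 : Matrix (Fin n) (Fin n) ℝ)) *ᵥ x = H *ᵥ x - l • x := by
      rw [Matrix.sub_mulVec, Matrix.smul_mulVec, Matrix.one_mulVec]
    rw [h1, dotProduct_sub, dotProduct_smul, star_eq_self]
    have h2 : 0 < x ⬝ᵥ H *ᵥ x := by
      have := hpd.dotProduct_mulVec_pos hx; rwa [star_eq_self] at this
    have h3 : 0 ≤ x ⬝ᵥ x := by
      simpa [dotProduct, ← sq] using Finset.sum_nonneg (fun i _ => sq_nonneg (x i))
    have : l * (x ⬝ᵥ x) ≤ 0 := mul_nonpos_of_nonpos_of_nonneg hl h3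
    simp only [smul_eq_mul]
    linarith

lemma posdef_mul_inv {A : Matrix (Fin n) (Fin n) ℝ} (h : A.PosDef) : A * A⁻¹ = 1 :=
  Matrix.mul_nonsing_inv A (isUnit_iff_isUnit_det _ |>.1 h.isUnit)

lemma posdef_mulVec_inv {A : Matrix (Fin n) (Fin n) ℝ} (h : A.PosDef) (v : Fin n → ℝ) :
    A *ᵥ (A⁻¹ *ᵥ v) = v := by
  rw [Matrix.mulVec_mulVec, posdef_mul_inv h, Matrix.one_mulVec]

lemma dot_pos {A : Matrix (Fin n) (Fin n) ℝ} (h : A.PosDef) {x : Fin n → ℝ} (hx : x ≠ 0) :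
    0 < x ⬝ᵥ A *ᵥ x := by
  have := h.dotProduct_mulVec_pos hx; rwa [star_eq_self] at this

lemma dot_nonneg {A : Matrix (Fin n) (Fin n) ℝ} (h : A.PosDef) (x : Fin n → ℝ) :
    0 ≤ x ⬝ᵥ A *ᵥ x := by
  have := h.posSemidef.dotProduct_mulVec_nonneg x; rwa [star_eq_self] at this

lemma symm_dot {A : Matrix (Fin n) (Fin n) ℝ} (h : A.IsHermitian) (u v : Fin n → ℝ) :
    (A *ᵥ u) ⬝ᵥ v = u ⬝ᵥ (A *ᵥ v) := by
  have hAt : Aᵀ = A := by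
    have := h.eq; rwa [conjTranspose_eq_transpose_of_trivial] at this
  rw [dotProduct_comm, Matrix.dotProduct_mulVec, ← Matrix.mulVec_transpose, hAt,
    dotProduct_comm]

/-- Key quadratic optimality: for symmetric posdef `A`, `x* = -A⁻¹g` minimizes
`2 gᵀ x + xᵀ A x`. -/
lemma quad_opt {A : Matrix (Fin n) (Fin n) ℝ} (h : A.PosDef) (g : Fin n → ℝ) (y : Fin n → ℝ) :
    2 * (g ⬝ᵥ (-(A⁻¹ *ᵥ g))) + (-(A⁻¹ *ᵥ g)) ⬝ᵥ A *ᵥ (-(A⁻¹ *ᵥ g)) ≤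
      2 * (g ⬝ᵥ y) + y ⬝ᵥ A *ᵥ y := by
  set xs := -(A⁻¹ *ᵥ g) with hxs
  have hAxs : A *ᵥ xs = -g := by
    rw [hxs, Matrix.mulVec_neg, posdef_mulVec_inv h]
  have hd : 0 ≤ (y - xs) ⬝ᵥ A *ᵥ (y - xs) := dot_nonneg h _
  have expand : (y - xs) ⬝ᵥ A *ᵥ (y - xs)
      = y ⬝ᵥ A *ᵥ y - y ⬝ᵥ A *ᵥ xs - xs ⬝ᵥ A *ᵥ y + xs ⬝ᵥ A *ᵥ xs := by
    rw [Matrix.mulVec_sub, sub_dotProduct, dotProduct_sub, dotProduct_sub]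
    ring
  have h1 : y ⬝ᵥ A *ᵥ xs = -(g ⬝ᵥ y) := by rw [hAxs]; simp [dotProduct_comm, dotProduct_neg]
  have h2 : xs ⬝ᵥ A *ᵥ y = -(g ⬝ᵥ y) := by
    rw [← symm_dot h.1, hAxs]; simp [dotProduct_comm]
  have h3 : xs ⬝ᵥ A *ᵥ xs = -(g ⬝ᵥ xs) := by rw [hAxs]; simp [dotProduct_comm]
  rw [h1, h2, h3] at expand
  have h4 : (y - xs) ⬝ᵥ A *ᵥ (y - xs) = y ⬝ᵥ A *ᵥ y + 2*(g ⬝ᵥ y) - (g ⬝ᵥ xs) := by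
    rw [expand]; ring
  rw [h3]
  linarith [hd, h4.symm ▸ hd]

lemma shift_commute (H : Matrix (Fin n) (Fin n) ℝ) (a b : ℝ) :
    (H - a • (1 : Matrix (Fin n) (Fin n) ℝ)) * (H - b • (1 : Matrix (Fin n) (Fin n) ℝ)) =
    (H - b • (1 : Matrix (Fin n) (Fin n) ℝ)) * (H - a • (1 : Matrix (Fin n) (Fin n) ℝ)) := by
  simp only [Matrix.sub_mul, Matrix.mul_sub, Matrix.smul_mul, Matrix.mul_smul, smul_sub,
    Matrix.one_mul, Matrix.mul_one, smul_smul, mul_comm a b]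
  abel

lemma inv_commute {A B : Matrix (Fin n) (Fin n) ℝ} (hA : A.PosDef) (hB : B.PosDef)
    (hc : A * B = B * A) : A⁻¹ * B⁻¹ = B⁻¹ * A⁻¹ := by
  rw [← Matrix.mul_inv_rev, ← Matrix.mul_inv_rev, hc]

lemma nsq_nonneg {m : Type*} [Fintype m] (x : m → ℝ) : 0 ≤ nsq x := by
  simpa [nsq, dotProduct, ← sq] using Finset.sum_nonneg (fun i _ => sq_nonneg (x i))

lemma nsq_pos {x : Fin n → ℝ} (hx : x ≠ 0) : 0 < nsq x := by
  rcases (nsq_nonneg x).lt_or_eq with h | h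
  · exact h
  · exfalso; apply hx; funext i
    have : ∑ j, x j * x j = 0 := by simpa [nsq, dotProduct] using h.symm
    have h2 := (Finset.sum_eq_zero_iff_of_nonneg (fun j _ => mul_self_nonneg (x j))).1 this
    have := h2 i (Finset.mem_univ i)
    simpa using mul_self_eq_zero.1 this

lemma inv_mulVec_ne_zero {A : Matrix (Fin n) (Fin n) ℝ} (hA : A.PosDef) {g : Fin n → ℝ}
    (hg : g ≠ 0) : A⁻¹ *ᵥ g ≠ 0 := by
  intro h
  apply hg
  have := congrArg (A *ᵥ ·) h
  simpa [posdef_mulVec_inv hA] using this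

/-- Strict monotonicity of `λ ↦ ‖(H-λI)⁻¹ g‖²` on `(-∞,0)`. -/
lemma phi_strictMono {H : Matrix (Fin n) (Fin n) ℝ} (hpd : H.PosDef) {g : Fin n → ℝ}
    (hg : g ≠ 0) {l1 l2 : ℝ} (h1 : l1 < l2) (h2 : l2 < 0) :
    nsq ((H - l1 • (1 : Matrix (Fin n) (Fin n) ℝ))⁻¹ *ᵥ g) <
    nsq ((H - l2 • (1 : Matrix (Fin n) (Fin n) ℝ))⁻¹ *ᵥ g) := by
  set A1 := H - l1 • (1 : Matrix (Fin n) (Fin n) ℝ) with hA1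
  set A2 := H - l2 • (1 : Matrix (Fin n) (Fin n) ℝ) with hA2
  have hP1 : A1.PosDef := posdef_shift hpd (by linarith)
  have hP2 : A2.PosDef := posdef_shift hpd (le_of_lt h2)
  set x1 := A1⁻¹ *ᵥ g with hx1
  set x2 := A2⁻¹ *ᵥ g with hx2
  have hx1ne : x1 ≠ 0 := inv_mulVec_ne_zero hP1 hg
  have hx2ne : x2 ≠ 0 := inv_mulVec_ne_zero hP2 hg
  -- resolvent identity : x2 - x1 = (l2 - l1) • (A1⁻¹ *ᵥ x2)
  have key : x2 - x1 = (l2 - l1) • (A1⁻¹ *ᵥ x2) := by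
    have e1 : A1 *ᵥ (x2 - x1) = (l2 - l1) • x2 := by
      rw [Matrix.mulVec_sub]
      have e2 : A1 *ᵥ x1 = g := posdef_mulVec_inv hP1 g
      have e3 : A2 *ᵥ x2 = g := posdef_mulVec_inv hP2 g
      have e4 : A1 *ᵥ x2 = A2 *ᵥ x2 + (l2 - l1) • x2 := by
        have : A1 = A2 + (l2 - l1) • (1 : Matrix (Fin n) (Fin n) ℝ) := by
          rw [hA1, hA2]; rw [sub_smul]; abel
        rw [this, Matrix.add_mulVec, Matrix.smul_mulVec, Matrix.one_mulVec]
      rw [e4, e2, e3]; abel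
    calc x2 - x1 = A1⁻¹ *ᵥ (A1 *ᵥ (x2 - x1)) := by
          rw [Matrix.mulVec_mulVec]
          rw [Matrix.nonsing_inv_mul A1 (isUnit_iff_isUnit_det _ |>.1 hP1.isUnit), Matrix.one_mulVec]
      _ = (l2 - l1) • (A1⁻¹ *ᵥ x2) := by rw [e1, Matrix.mulVec_smul]
  set w := A1⁻¹ *ᵥ x2 with hw
  have hinv1 : A1⁻¹.PosDef := hP1.inv
  have hinv2 : A2⁻¹.PosDef := hP2.inv
  have term2 : 0 < w ⬝ᵥ x2 := by
    have := dot_pos hinv1 hx2ne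
    rwa [dotProduct_comm] at this
  have term1 : 0 < w ⬝ᵥ x1 := by
    -- w ⬝ x1 = (A1⁻¹ A2⁻¹ g) ⬝ (A1⁻¹ g) = (A2⁻¹ x1) ⬝ x1 using commutation and symmetry
    have hcomm : A1⁻¹ * A2⁻¹ = A2⁻¹ * A1⁻¹ := inv_commute hP1 hP2 (shift_commute H l1 l2)
    have hwx : w = A2⁻¹ *ᵥ x1 := by
      rw [hw, hx2, hx1, Matrix.mulVec_mulVec, Matrix.mulVec_mulVec, hcomm]
    rw [hwx]
    have := dot_pos hinv2 hx1ne
    rwa [dotProduct_comm] at this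
  have expand : nsq x2 - nsq x1 = (l2 - l1) * (w ⬝ᵥ x2 + w ⬝ᵥ x1) := by
    have : nsq x2 - nsq x1 = (x2 - x1) ⬝ᵥ (x2 + x1) := by
      simp only [nsq, sub_dotProduct, dotProduct_add]
      rw [dotProduct_comm x1 x2]; ring
    rw [this, key]
    simp only [smul_dotProduct, dotProduct_add, smul_eq_mul]
    ring
  nlinarith [expand, term1, term2, sub_pos.2 h1]

/-- Decay bound: `‖(H-λI)⁻¹g‖² ≤ ‖g‖²/λ²` for `λ < 0`. -/
lemma phi_bound {H : Matrix (Fin n) (Fin n) ℝ} (hpd : H.PosDef) (g : Fin n → ℝ)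
    {l : ℝ} (hl : l < 0) :
    nsq ((H - l • (1 : Matrix (Fin n) (Fin n) ℝ))⁻¹ *ᵥ g) ≤ nsq g / l ^ 2 := by
  set A := H - l • (1 : Matrix (Fin n) (Fin n) ℝ) with hA
  have hP : A.PosDef := posdef_shift hpd hl.le
  set y := A⁻¹ *ᵥ g with hy
  set t := nsq y with ht
  have htn : 0 ≤ t := nsq_nonneg y
  have h1 : y ⬝ᵥ A *ᵥ y = y ⬝ᵥ H *ᵥ y - l * t := by
    rw [hA, Matrix.sub_mulVec, Matrix.smul_mulVec, Matrix.one_mulVec,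
      dotProduct_sub, dotProduct_smul]
    simp [ht, nsq, smul_eq_mul]
  have h2 : y ⬝ᵥ A *ᵥ y = y ⬝ᵥ g := by rw [hy, posdef_mulVec_inv hP]
  have h3 : 0 ≤ y ⬝ᵥ H *ᵥ y := dot_nonneg hpd y
  have h4 : (-l) * t ≤ y ⬝ᵥ g := by nlinarith
  have hCS : (y ⬝ᵥ g) ^ 2 ≤ t * nsq g := by
    have h := Finset.sum_mul_sq_le_sq_mul_sq Finset.univ y g
    simpa [dotProduct, nsq, ht, sq] using h
  have h4' : 0 ≤ (-l) * t := mul_nonneg (by linarith) htn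
  have h5 : ((-l) * t) ^ 2 ≤ t * nsq g :=
    le_trans (pow_le_pow_left₀ h4' h4 2) hCS
  have hl2 : 0 < l ^ 2 := pow_two_pos_of_ne_zero hl.ne
  rw [le_div_iff₀ hl2]
  rcases htn.lt_or_eq with h | h
  · nlinarith
  · rw [← h]; simpa using nsq_nonneg g

/-- Continuity of `λ ↦ ‖(H-λI)⁻¹ g‖²` on `(-∞,0]`. -/
lemma phi_contOn {H : Matrix (Fin n) (Fin n) ℝ} (hpd : H.PosDef) (g : Fin n → ℝ) :
    ContinuousOn (fun l : ℝ => nsq ((H - l • (1 : Matrix (Fin n) (Fin n) ℝ))⁻¹ *ᵥ g))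
      (Iic 0) := by
  have hAc : Continuous (fun l : ℝ => H - l • (1 : Matrix (Fin n) (Fin n) ℝ)) := by
    exact continuous_const.sub (continuous_id.smul continuous_const)
  have hdet : ContinuousOn (fun l : ℝ => ((H - l • (1 : Matrix (Fin n) (Fin n) ℝ)).det)⁻¹)
      (Iic 0) := by
    apply ContinuousOn.inv₀ (hAc.matrix_det.continuousOn)
    intro l hl
    exact (posdef_shift hpd (mem_Iic.1 hl)).det_pos.ne'
  have hadj : Continuous (fun l : ℝ => (H - l • (1 : Matrix (Fin n) (Fin n) ℝ)).adjugate) :=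
    hAc.matrix_adjugate
  have hinv : ContinuousOn (fun l : ℝ => (H - l • (1 : Matrix (Fin n) (Fin n) ℝ))⁻¹) (Iic 0) := by
    have : ∀ l : ℝ, (H - l • (1 : Matrix (Fin n) (Fin n) ℝ))⁻¹ =
        ((H - l • (1 : Matrix (Fin n) (Fin n) ℝ)).det)⁻¹ •
          (H - l • (1 : Matrix (Fin n) (Fin n) ℝ)).adjugate := by
      intro l; rw [Matrix.inv_def, Ring.inverse_eq_inv']
    simp only [this]
    exact hdet.smul hadj.continuousOn
  have hK : Continuous (fun M : Matrix (Fin n) (Fin n) ℝ => nsq (M *ᵥ g)) := by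
    have h1 : Continuous (fun M : Matrix (Fin n) (Fin n) ℝ => M *ᵥ g) :=
      continuous_id.matrix_mulVec continuous_const
    exact h1.dotProduct h1
  exact hK.comp_continuousOn hinv

end matrixAux

variable {ρ : ℝ → EReal}

section conj
variable (hnn : ∀ t, 0 ≤ ρ t) (h0 : ρ 0 = 0) (h2 : Assump2 ρ)
include hnn h0

lemma mconj_nonneg (u : ℝ) : 0 ≤ mconj ρ u := by
  have := le_iSup (fun t : {t : ℝ // 0 ≤ t} => (((u * (t : ℝ) : ℝ) : EReal) - ρ t))
    ⟨0, le_refl 0⟩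
  simpa [h0, mconj] using this

include h2 in
lemma mconj_ne_top (u : ℝ) : mconj ρ u ≠ ⊤ := by
  obtain ⟨T, hT⟩ := (h2 (|u| + 1)).exists_forall_of_atTop
  set T' := max T 0 with hT'
  set C := max (u * T') 0 + 1 with hC
  have hbound : mconj ρ u ≤ (C : EReal) := by
    apply iSup_le
    rintro ⟨t, ht⟩
    rcases le_or_gt t T' with h | h
    · -- small t : u*t ≤ C, ρ t ≥ 0
      have h1 : ((u * t : ℝ) : EReal) - ρ t ≤ ((u * t : ℝ) : EReal) - 0 :=
        EReal.sub_le_sub (le_refl _) (hnn t)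
      have h2' : u * t ≤ C := by
        rcases le_or_gt u 0 with hu | hu
        · have : u * t ≤ 0 := mul_nonpos_of_nonpos_of_nonneg hu ht
          simp only [hC]; nlinarith [le_max_right (u * T') (0:ℝ)]
        · have : u * t ≤ u * T' := by
            apply mul_le_mul_of_nonneg_left h hu.le
          simp only [hC]; nlinarith [le_max_left (u * T') (0:ℝ)]
      calc ((u * t : ℝ) : EReal) - ρ t ≤ ((u * t : ℝ) : EReal) - 0 := h1
        _ = ((u * t : ℝ) : EReal) := by simp
        _ ≤ (C : EReal) := by exact_mod_cast h2'
    · -- large t : ρ t ≥ (|u|+1) t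
      have hle : ((( |u| + 1) * t : ℝ) : EReal) ≤ ρ t := hT t (le_trans (le_max_left T 0) h.le)
      have h1 : ((u * t : ℝ) : EReal) - ρ t ≤ ((u * t : ℝ) : EReal) - (((|u| + 1) * t : ℝ) : EReal) :=
        EReal.sub_le_sub (le_refl _) hle
      have ht0 : 0 ≤ t := ht
      have h2' : u * t - (|u| + 1) * t ≤ C := by
        have : u * t - (|u| + 1) * t = (u - |u| - 1) * t := by ring
        rw [this]
        have hneg : u - |u| - 1 ≤ 0 := by
          have := abs_nonneg u; have := le_abs_self u; linarith
        have : (u - |u| - 1) * t ≤ 0 := mul_nonpos_of_nonpos_of_nonneg hneg ht0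
        simp only [hC]; nlinarith [le_max_right (u * T') (0:ℝ)]
      calc ((u * t : ℝ) : EReal) - ρ t
          ≤ ((u * t : ℝ) : EReal) - (((|u| + 1) * t : ℝ) : EReal) := h1
        _ = ((u * t - (|u| + 1) * t : ℝ) : EReal) := by
            rw [← EReal.coe_sub]
        _ ≤ (C : EReal) := by exact_mod_cast h2'
  intro htop
  rw [htop] at hbound
  exact (not_le.2 (EReal.coe_lt_top C)) hbound

include h2 in
lemma coe_mconjR (u : ℝ) : ((mconjR ρ u : ℝ) : EReal) = mconj ρ u :=
  EReal.coe_toReal (mconj_ne_top hnn h0 h2 u)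
    (ne_bot_of_le_ne_bot (by simp) (mconj_nonneg hnn h0 u))

include h2 in
lemma mconjR_nonneg (u : ℝ) : 0 ≤ mconjR ρ u := by
  have := mconj_nonneg hnn h0 (ρ := ρ) u
  rw [← coe_mconjR hnn h0 h2 u] at this
  exact_mod_cast this

include h2 in
/-- Fenchel–Young inequality. -/
lemma FY (u t : ℝ) (ht : 0 ≤ t) : ((u * t - mconjR ρ u : ℝ) : EReal) ≤ ρ t := by
  have hle : ((u * t : ℝ) : EReal) - ρ t ≤ ((mconjR ρ u : ℝ) : EReal) := by
    rw [coe_mconjR hnn h0 h2 u]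
    exact le_iSup (fun s : {s : ℝ // 0 ≤ s} => (((u * (s : ℝ) : ℝ) : EReal) - ρ s)) ⟨t, ht⟩
  rcases eq_top_or_lt_top (ρ t) with h | h
  · rw [h]; exact le_top
  · have hne : ρ t ≠ ⊥ := ne_bot_of_le_ne_bot (by simp) (hnn t)
    lift ρ t to ℝ using ⟨h.ne, hne⟩ with r hr
    rw [← EReal.coe_sub] at hle
    have : u * t - r ≤ mconjR ρ u := by exact_mod_cast hle
    exact_mod_cast (by linarith : u * t - mconjR ρ u ≤ r)

include h2 in
/-- Near-maximizers exist. -/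
lemma nearmax (u : ℝ) {ε : ℝ} (hε : 0 < ε) :
    ∃ t : ℝ, 0 ≤ t ∧ ∃ r : ℝ, 0 ≤ r ∧ ρ t = (r : EReal) ∧
      r ≤ u * t - mconjR ρ u + ε := by
  have hlt : ((mconjR ρ u - ε : ℝ) : EReal) < mconj ρ u := by
    rw [← coe_mconjR hnn h0 h2 u]
    exact_mod_cast sub_lt_self _ hε
  rw [mconj, lt_iSup_iff] at hlt
  obtain ⟨⟨t, ht⟩, hval⟩ := hlt
  refine ⟨t, ht, ?_⟩
  rcases eq_top_or_lt_top (ρ t) with h | h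
  · exfalso; rw [h] at hval; simp at hval
  · have hne : ρ t ≠ ⊥ := ne_bot_of_le_ne_bot (by simp) (hnn t)
    lift ρ t to ℝ using ⟨h.ne, hne⟩ with r hr
    have h0r : (0:EReal) ≤ (r : EReal) := hr ▸ hnn t
    refine ⟨r, by exact_mod_cast h0r, rfl, ?_⟩
    rw [← EReal.coe_sub] at hval
    have : mconjR ρ u - ε < u * t - r := by exact_mod_cast hval
    linarith

/-- `mconjR` is convex as a sup of affine functions. -/
lemma mconjR_convexOn (h2 : Assump2 ρ) : ConvexOn ℝ univ (mconjR ρ) := by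
  refine ⟨convex_univ, ?_⟩
  intro x _ y _ a b ha hb hab
  have key : mconj ρ (a * x + b * y) ≤ ((a * mconjR ρ x + b * mconjR ρ y : ℝ) : EReal) := by
    apply iSup_le
    rintro ⟨t, ht⟩
    rcases eq_top_or_lt_top (ρ t) with h | h
    · rw [h]; simp [EReal.sub_top]
    · have hne : ρ t ≠ ⊥ := ne_bot_of_le_ne_bot (by simp) (hnn t)
      lift ρ t to ℝ using ⟨h.ne, hne⟩ with r hr
      have hx : x * t - r ≤ mconjR ρ x := by
        have h' := FY hnn h0 h2 x t ht
        rw [← hr] at h'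
        have : x * t - mconjR ρ x ≤ r := by exact_mod_cast h'
        linarith
      have hy : y * t - r ≤ mconjR ρ y := by
        have h' := FY hnn h0 h2 y t ht
        rw [← hr] at h'
        have : y * t - mconjR ρ y ≤ r := by exact_mod_cast h'
        linarith
      rw [← EReal.coe_sub]
      apply EReal.coe_le_coe_iff.2
      calc (a * x + b * y) * t - r = a * (x * t - r) + b * (y * t - r) := by
            linear_combination r * hab
        _ ≤ a * mconjR ρ x + b * mconjR ρ y := by
            apply add_le_add
            · exact mul_le_mul_of_nonneg_left hx ha
            · exact mul_le_mul_of_nonneg_left hy hb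
  have := EReal.toReal_le_toReal key
    (ne_bot_of_le_ne_bot (by simp) (mconj_nonneg hnn h0 _)) (EReal.coe_ne_top _)
  rw [EReal.toReal_coe] at this
  simpa [mconjR, smul_eq_mul] using this

include h2 in
lemma mconjR_lower {t₀ r₀ : ℝ} (ht₀ : 0 ≤ t₀) (hρ : ρ t₀ = (r₀ : EReal)) (u : ℝ) :
    u * t₀ - r₀ ≤ mconjR ρ u := by
  have hle : ((u * t₀ : ℝ) : EReal) - ρ t₀ ≤ ((mconjR ρ u : ℝ) : EReal) := by
    rw [coe_mconjR hnn h0 h2 u]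
    exact le_iSup (fun s : {s : ℝ // 0 ≤ s} => (((u * (s : ℝ) : ℝ) : EReal) - ρ s)) ⟨t₀, ht₀⟩
  rw [hρ, ← EReal.coe_sub] at hle
  exact_mod_cast hle

end conj

/-- A monotone function on `(0,∞)` with order-connected image is continuous there. -/
lemma cont_of_mono_darboux {g : ℝ → ℝ} (hm : MonotoneOn g (Ioi 0))
    (hd : OrdConnected (g '' Ioi 0)) {a : ℝ} (ha : 0 < a) : ContinuousAt g a := by
  rw [continuousAt_iff_continuous_left_right]
  constructor
  · -- left continuity
    rw [ContinuousWithinAt]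
    apply tendsto_order.2
    constructor
    · intro b hb
      by_cases hex : ∃ x, 0 < x ∧ x < a ∧ b < g x
      · obtain ⟨x, hx0, hxa, hbx⟩ := hex
        have h1 : ∀ᶠ x' in 𝓝[Iic a] a, x < x' :=
          ((eventually_gt_nhds hxa).filter_mono nhdsWithin_le_nhds)
        filter_upwards [h1] with x' hx'
        exact lt_of_lt_of_le hbx (hm (mem_Ioi.2 hx0) (mem_Ioi.2 (lt_trans hx0 hx')) hx'.le)
      · exfalso
        push_neg at hex
        set mid := (b + g a) / 2 with hmid
        have hmid1 : b < mid := by rw [hmid]; linarith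
        have hmid2 : mid < g a := by rw [hmid]; linarith
        have hha : g (a/2) ≤ b := hex (a/2) (by linarith) (by linarith)
        have hsub := hd.out (mem_image_of_mem g (mem_Ioi.2 (by linarith : (0:ℝ) < a/2)))
          (mem_image_of_mem g (mem_Ioi.2 ha))
        obtain ⟨c, hc, hgc⟩ := hsub ⟨by linarith, hmid2.le⟩
        have hcA : c < a := by
          by_contra hca
          push_neg at hca
          have := hm (mem_Ioi.2 ha) hc hca
          rw [hgc] at this
          linarith
        have := hex c (mem_Ioi.1 hc) hcA
        rw [hgc] at this
        linarith
    · intro b hb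
      filter_upwards [self_mem_nhdsWithin,
        ((eventually_gt_nhds ha).filter_mono nhdsWithin_le_nhds)] with x hx hx0
      exact lt_of_le_of_lt (hm (mem_Ioi.2 hx0) (mem_Ioi.2 ha) hx) hb
  · -- right continuity
    rw [ContinuousWithinAt]
    apply tendsto_order.2
    constructor
    · intro b hb
      filter_upwards [self_mem_nhdsWithin] with x hx
      exact lt_of_lt_of_le hb (hm (mem_Ioi.2 ha) (mem_Ioi.2 (lt_of_lt_of_le ha hx)) hx)
    · intro b hb
      by_cases hex : ∃ x, a < x ∧ g x < b
      · obtain ⟨x, hax, hxb⟩ := hex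
        have h1 : ∀ᶠ x' in 𝓝[Ici a] a, x' < x :=
          ((eventually_lt_nhds hax).filter_mono nhdsWithin_le_nhds)
        filter_upwards [h1, self_mem_nhdsWithin] with x' hx' hx'a
        exact lt_of_le_of_lt
          (hm (mem_Ioi.2 (lt_of_lt_of_le ha hx'a)) (mem_Ioi.2 (lt_trans ha hax)) hx'.le) hxb
      · exfalso
        push_neg at hex
        set mid := (g a + b) / 2 with hmid
        have hmid1 : g a < mid := by rw [hmid]; linarith
        have hmid2 : mid < b := by rw [hmid]; linarith
        have hb1 : b ≤ g (a + 1) := hex (a+1) (by linarith)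
        have hsub := hd.out (mem_image_of_mem g (mem_Ioi.2 ha))
          (mem_image_of_mem g (mem_Ioi.2 (by linarith : (0:ℝ) < a + 1)))
        obtain ⟨c, hc, hgc⟩ := hsub ⟨hmid1.le, by linarith⟩
        have hcA : a < c := by
          by_contra hca
          push_neg at hca
          have := hm hc (mem_Ioi.2 ha) hca
          rw [hgc] at this
          linarith
        have := hex c hcA
        rw [hgc] at this
        linarith

section lsc
variable (hnn : ∀ t, 0 ≤ ρ t) (h0 : ρ 0 = 0) (hlsc : LowerSemicontinuous ρ)
  (hmono : Monotone ρ) (h2 : Assump2 ρ)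
include hnn h0 hlsc hmono h2

/-- If `ρ th > 0` then the conjugate dips below the line `u ↦ u * th`. -/
lemma exists_u_lt (th : ℝ) (hth : 0 ≤ th) (hpos : 0 < ρ th) :
    ∃ u : ℝ, 0 < u ∧ mconjR ρ u < u * th := by
  by_contra hcon
  push_neg at hcon
  obtain ⟨y, hy1, hy2⟩ := EReal.exists_between_coe_real hpos
  have hy0 : (0:ℝ) < y := by exact_mod_cast hy1
  obtain ⟨δ, hδ, hball⟩ := Metric.eventually_nhds_iff.1 (hlsc th _ hy2)
  obtain ⟨T, hT⟩ := (h2 1).exists_forall_of_atTop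
  set C := max (max T 0) 1 with hC
  have hC1 : (1:ℝ) ≤ C := le_max_right _ _
  set u := min (δ/2) (min (1/2) (y/(2*(C+1)))) with hu
  have hu0 : 0 < u := by
    apply lt_min (by linarith)
    apply lt_min (by norm_num)
    positivity
  have huδ : u ≤ δ/2 := min_le_left _ _
  have hu12 : u ≤ 1/2 := le_trans (min_le_right _ _) (min_le_left _ _)
  have huy : u ≤ y/(2*(C+1)) := le_trans (min_le_right _ _) (min_le_right _ _)
  obtain ⟨t, ht, r, hr0, hρt, hrle⟩ := nearmax hnn h0 h2 u (ε := u^2) (by positivity)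
  have hfu : u * th ≤ mconjR ρ u := hcon u hu0
  have hr2 : r ≤ u * t - u * th + u^2 := by
    have : u * t - mconjR ρ u + u^2 ≤ u * t - u * th + u^2 := by linarith
    linarith [hrle]
  have htlow : th - u ≤ t := by nlinarith
  have htC : t ≤ C := by
    rcases le_or_gt t (max T 0) with h | h
    · exact le_trans h (le_max_left _ _)
    · have hTt : ((1 * t : ℝ) : EReal) ≤ ρ t := hT t (le_trans (le_max_left T 0) h.le)
      rw [hρt] at hTt
      have h1t : t ≤ r := by exact_mod_cast (by simpa using hTt : ((t:ℝ):EReal) ≤ (r:EReal))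
      -- t ≤ u t - u th + u²  ⇒  t (1-u) ≤ u² ⇒ t ≤ 2 u² ≤ 1
      have : t * (1 - u) ≤ u^2 := by nlinarith
      have ht1 : t ≤ 1 := by nlinarith
      linarith [hC1]
  have hry : r < y := by
    have : u * t - u * th + u^2 ≤ u * C + u^2 := by nlinarith
    have h2' : u * C + u^2 ≤ u * (C + 1) := by nlinarith
    have h3' : u * (C+1) ≤ y/2 := by
      have := mul_le_mul_of_nonneg_right huy (by linarith : (0:ℝ) ≤ C+1)
      calc u * (C+1) ≤ y/(2*(C+1)) * (C+1) := this
        _ = y/2 := by field_simp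
    linarith
  -- lsc contradiction at th - u
  have hdist : dist (th - u) th < δ := by
    rw [Real.dist_eq]
    rw [abs_of_nonpos (by linarith)]
    linarith
  have hlsc2 := hball hdist
  have hmle : ρ (th - u) ≤ ρ t := hmono (by linarith)
  rw [hρt] at hmle
  have hyr' : (y : EReal) < (r : EReal) := lt_of_lt_of_le hlsc2 hmle
  have : y < r := by exact_mod_cast hyr'
  linarith

/-- Fenchel–Young equality direction via lower semicontinuity:
at a differentiability point the value `ρ (f' u₀)` is dominated. -/
lemma rho_le_of_deriv {u₀ ts : ℝ} (hu : 0 < u₀) (hd : HasDerivAt (mconjR ρ) ts u₀) :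
    ρ ts ≤ ((u₀ * ts - mconjR ρ u₀ : ℝ) : EReal) := by
  by_contra hcon
  push_neg at hcon
  set f := mconjR ρ with hf
  set c := u₀ * ts - f u₀ with hc
  obtain ⟨y, hy1, hy2⟩ := EReal.exists_between_coe_real hcon
  have hcy : c < y := by exact_mod_cast hy1
  set m := y - c with hm
  have hm0 : 0 < m := by linarith
  obtain ⟨δ, hδ, hball⟩ := Metric.eventually_nhds_iff.1 (hlsc ts _ hy2)
  set ε := min (δ/6) (m/(24*(u₀+1))) with hε
  have hε0 : 0 < ε := lt_min (by linarith) (by positivity)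
  have hεδ : ε ≤ δ/6 := min_le_left _ _
  have hεm : ε ≤ m/(24*(u₀+1)) := min_le_right _ _
  have hlo := (hasDerivAt_iff_isLittleO_nhds_zero.1 hd).def hε0
  obtain ⟨δ₂, hδ₂, hb2⟩ := Metric.eventually_nhds_iff.1 hlo
  set h := min (δ₂/3) (min (δ/4) (min 1 (min (m/8) (m/(4*(u₀+1)))))) with hh
  have hh0 : 0 < h := by
    apply lt_min (by linarith)
    apply lt_min (by linarith)
    apply lt_min one_pos
    exact lt_min (by linarith) (by positivity)
  have hhδ₂ : h ≤ δ₂/3 := min_le_left _ _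
  have hhδ : h ≤ δ/4 := le_trans (min_le_right _ _) (min_le_left _ _)
  have hh1 : h ≤ 1 := le_trans (min_le_right _ _) (le_trans (min_le_right _ _) (min_le_left _ _))
  have hhm8 : h ≤ m/8 := le_trans (min_le_right _ _) (le_trans (min_le_right _ _)
    (le_trans (min_le_right _ _) (min_le_left _ _)))
  have hhmu : h ≤ m/(4*(u₀+1)) := le_trans (min_le_right _ _) (le_trans (min_le_right _ _)
    (le_trans (min_le_right _ _) (min_le_right _ _)))
  have hball1 : |f (u₀ + h) - f u₀ - h * ts| ≤ ε * h := by
    have := hb2 (show dist h 0 < δ₂ by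
      rw [Real.dist_eq, sub_zero, abs_of_pos hh0]; linarith)
    rw [Real.norm_eq_abs, Real.norm_eq_abs, abs_of_pos hh0, smul_eq_mul] at this
    exact this
  have hball2 : |f (u₀ + 2*h) - f u₀ - (2*h) * ts| ≤ ε * (2*h) := by
    have := hb2 (show dist (2*h) 0 < δ₂ by
      rw [Real.dist_eq, sub_zero, abs_of_pos (by linarith)]; linarith)
    rw [Real.norm_eq_abs, Real.norm_eq_abs, abs_of_pos (by linarith : (0:ℝ) < 2*h),
      smul_eq_mul] at this
    exact this
  rw [abs_le] at hball1 hball2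
  obtain ⟨t, ht, r, hr0, hρt, hrle⟩ :=
    nearmax hnn h0 h2 (u₀ + h) (ε := h^2) (by positivity)
  -- Fenchel-Young at u₀ and u₀ + 2h
  have hFY0 : u₀ * t - f u₀ ≤ r := by
    have := FY hnn h0 h2 u₀ t ht
    rw [hρt] at this
    exact_mod_cast this
  have hFY2 : (u₀ + 2*h) * t - f (u₀ + 2*h) ≤ r := by
    have := FY hnn h0 h2 (u₀ + 2*h) t ht
    rw [hρt] at this
    exact_mod_cast this
  -- t bounds
  have htlow : ts - ε - h ≤ t := by nlinarith [hrle, hFY0, hball1.1]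
  have hthigh : t ≤ ts + 3*ε + h := by nlinarith [hrle, hFY2, hball2.2, hball1.1]
  -- lsc gives y < r
  have hdist : dist t ts < δ := by
    rw [Real.dist_eq, abs_lt]
    constructor <;> nlinarith
  have hyr : y < r := by
    have : (y : EReal) < ρ t := hball hdist
    rw [hρt] at this
    exact_mod_cast this
  -- but r < y
  have hru : r ≤ (u₀ + h) * t - f (u₀ + h) + h^2 := hrle
  have hfl : f u₀ + h * ts - ε * h ≤ f (u₀ + h) := by nlinarith [hball1.1]
  have hrbound : r ≤ c + 3*ε*u₀ + u₀*h + 4*ε*h + 2*h^2 := by nlinarith [hthigh, hfl]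
  have hεu : 3*ε*u₀ ≤ m/8 := by
    have h1 : ε * (24*(u₀+1)) ≤ m := by
      have := mul_le_mul_of_nonneg_right hεm (by positivity : (0:ℝ) ≤ 24*(u₀+1))
      calc ε * (24*(u₀+1)) ≤ m/(24*(u₀+1)) * (24*(u₀+1)) := this
        _ = m := by field_simp
    nlinarith
  have hu0h : u₀ * h ≤ m/4 := by
    have h1 : h * (4*(u₀+1)) ≤ m := by
      have := mul_le_mul_of_nonneg_right hhmu (by positivity : (0:ℝ) ≤ 4*(u₀+1))
      calc h * (4*(u₀+1)) ≤ m/(4*(u₀+1)) * (4*(u₀+1)) := this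
        _ = m := by field_simp
    nlinarith
  have hεh : 4*ε*h ≤ m/6 := by
    have hεm' : ε ≤ m/24 := by
      have : m/(24*(u₀+1)) ≤ m/24 := by
        apply div_le_div_of_nonneg_left hm0.le (by norm_num) (by nlinarith)
      linarith
    nlinarith
  have hh2 : 2*h^2 ≤ m/4 := by nlinarith
  linarith
end lsc


section derivAux
variable {ρ : ℝ → EReal}
variable (hnn : ∀ t, 0 ≤ ρ t) (h0 : ρ 0 = 0) (h2 : Assump2 ρ)
include hnn h0 h2

lemma deriv_lb (h3 : Assump3 ρ)
    {t₀ r₀ : ℝ} (ht₀ : 0 < t₀) (hρ : ρ t₀ = (r₀ : EReal)) {u : ℝ}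
    (hu2 : 2 ≤ u) (hu3 : (2*(r₀ + mconjR ρ 1) + t₀)/t₀ ≤ u) :
    t₀/2 ≤ deriv (mconjR ρ) u := by
  have hcv := mconjR_convexOn hnn h0 h2
  have h1u : (1:ℝ) < u := by linarith
  have hslope := hcv.slope_le_deriv (mem_univ 1) (mem_univ u) h1u (h3 u (by linarith))
  rw [slope_def_field] at hslope
  have hlow : u * t₀ - r₀ ≤ mconjR ρ u := mconjR_lower hnn h0 h2 ht₀.le hρ u
  have hkey : 2*(r₀ + mconjR ρ 1) + t₀ ≤ u * t₀ := by
    have h' := mul_le_mul_of_nonneg_right hu3 ht₀.le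
    calc 2*(r₀ + mconjR ρ 1) + t₀ = (2*(r₀ + mconjR ρ 1) + t₀)/t₀ * t₀ := by
          field_simp
      _ ≤ u * t₀ := h'
  refine le_trans ?_ hslope
  rw [le_div_iff₀ (by linarith : (0:ℝ) < u - 1)]
  nlinarith

lemma deriv_ub (h3 : Assump3 ρ) {th u₀ : ℝ} (hth : 0 < th) (hu₀ : 0 < u₀)
    (hlt : mconjR ρ u₀ < u₀ * th) {u : ℝ} (hu : 0 < u)
    (hub : u ≤ (u₀ * th - mconjR ρ u₀)/(2*(th+1))) :
    deriv (mconjR ρ) u ≤ th - (u₀ * th - mconjR ρ u₀)/(2*u₀) := by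
  have hcv := mconjR_convexOn hnn h0 h2
  set d := u₀ * th - mconjR ρ u₀ with hd
  have hd0 : 0 < d := by rw [hd]; linarith
  have hfnn : 0 ≤ mconjR ρ u₀ := mconjR_nonneg hnn h0 h2 u₀
  have hfu : 0 ≤ mconjR ρ u := mconjR_nonneg hnn h0 h2 u
  have hub' : u * (2*(th+1)) ≤ d := by
    rw [← le_div_iff₀ (by linarith : (0:ℝ) < 2*(th+1))]
    exact hub
  have huu₀ : u < u₀ := by
    have h1 : d ≤ u₀ * th := by rw [hd]; linarith
    nlinarith
  have hslope := hcv.deriv_le_slope (mem_univ u) (mem_univ u₀) huu₀ (h3 u hu)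
  rw [slope_def_field] at hslope
  have key : (mconjR ρ u₀ - mconjR ρ u)/(u₀ - u) ≤ th - d/(2*u₀) := by
    rw [div_le_iff₀ (by linarith : (0:ℝ) < u₀ - u)]
    have e1 : d/(2*u₀) * u₀ = d/2 := by field_simp
    have e2 : 2 * (u * th) ≤ d := by nlinarith
    have e3 : 0 ≤ d/(2*u₀) * u := by positivity
    nlinarith
  linarith

lemma deriv_mconjR_contAt (h3 : Assump3 ρ) {a : ℝ} (ha : 0 < a) :
    ContinuousAt (deriv (mconjR ρ)) a := by
  have hcv := mconjR_convexOn hnn h0 h2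
  exact cont_of_mono_darboux
    ((hcv.subset (subset_univ _) (convex_Ioi 0)).monotoneOn_deriv (fun x hx => h3 x hx))
    (Set.ordConnected_Ioi.image_deriv (fun x hx => h3 x hx)) ha

end derivAux

theorem stmt9 {n : ℕ} (g : Fin n → ℝ) (hg : g ≠ 0)
    (H : Matrix (Fin n) (Fin n) ℝ) (hH : H.IsSymm) (hpd : H.PosDef)
    (ρ : ℝ → EReal) (hρ : RhoBasic ρ) (h1 : Assump1 ρ) (h2 : Assump2 ρ) (h3 : Assump3 ρ) :
    (nsq (H⁻¹.mulVec g) ∈ argminSet ρ →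
      (∀ y : Fin n → ℝ,
          (quadObj g H (-(H⁻¹.mulVec g)) : EReal) + ρ (nsq (-(H⁻¹.mulVec g))) ≤
            (quadObj g H y : EReal) + ρ (nsq y))) ∧
    (nsq (H⁻¹.mulVec g) ∉ argminSet ρ →
      ∃ ls : ℝ,
        (ls < 0 ∧
          nsq (((H - ls • (1 : Matrix (Fin n) (Fin n) ℝ))⁻¹).mulVec g) = deriv (mconjR ρ) (-ls) ∧
          (∀ y : Fin n → ℝ,
          (quadObj g H (-(((H - ls • (1 : Matrix (Fin n) (Fin n) ℝ))⁻¹).mulVec g)) : EReal) + ρ (nsq (-(((H - ls • (1 : Matrix (Fin n) (Fin n) ℝ))⁻¹).mulVec g))) ≤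
            (quadObj g H y : EReal) + ρ (nsq y))) ∧
        ∀ l : ℝ, l < 0 →
          nsq (((H - l • (1 : Matrix (Fin n) (Fin n) ℝ))⁻¹).mulVec g) = deriv (mconjR ρ) (-l) → l = ls) := by
  obtain ⟨hnn, h0, hlsc, _⟩ := hρ
  obtain ⟨hmono, hzero, t₀, ht₀, ht₀top⟩ := h1
  constructor
  · -- Part 1
    intro hmem y
    have hq := quad_opt hpd g y
    have hquad : quadObj g H (-(H⁻¹.mulVec g)) ≤ quadObj g H y := by
      simpa [quadObj] using hq
    have hρle : ρ (nsq (-(H⁻¹.mulVec g))) ≤ ρ (nsq y) := by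
      have hnsqe : nsq (-(H⁻¹.mulVec g)) = nsq (H⁻¹.mulVec g) := by
        simp [nsq]
      rw [hnsqe]
      exact hmem (nsq y)
    exact add_le_add (EReal.coe_le_coe_iff.2 hquad) hρle
  · -- Part 2
    intro hmem
    set th := nsq (H⁻¹.mulVec g) with hth
    have hthpos : 0 < th := nsq_pos (inv_mulVec_ne_zero hpd hg)
    have hρth : 0 < ρ th := by
      rcases not_forall.1 hmem with ⟨s, hs⟩
      exact lt_of_le_of_lt (hnn s) (not_le.1 hs)
    obtain ⟨u₀, hu₀, hu₀lt⟩ := exists_u_lt hnn h0 hlsc hmono h2 th hthpos.le hρth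
    have hcv := mconjR_convexOn hnn h0 h2
    -- value of ρ at t₀
    have hρt₀ne : ρ t₀ ≠ ⊥ := ne_bot_of_le_ne_bot (by simp) (hnn t₀)
    set r₀ := (ρ t₀).toReal with hr₀def
    have hρt₀ : ρ t₀ = (r₀ : EReal) := (EReal.coe_toReal ht₀top.ne hρt₀ne).symm
    have hr₀ : 0 ≤ r₀ := by
      have := hnn t₀
      rw [hρt₀] at this
      exact_mod_cast this
    set d := u₀ * th - mconjR ρ u₀ with hd
    have hd0 : 0 < d := by rw [hd]; linarith
    set m₂ := d/(2*u₀) with hm₂def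
    have hm₂ : 0 < m₂ := by rw [hm₂def]; positivity
    set uB := d/(2*(th+1)) with huBdef
    have huB : 0 < uB := by rw [huBdef]; positivity
    -- the left endpoint
    set uA := max 2 (max ((2*(r₀ + mconjR ρ 1) + t₀)/t₀) (Real.sqrt (nsq g/(t₀/2)) + 1)) with huA
    have huA2 : 2 ≤ uA := le_max_left _ _
    have hlbA : t₀/2 ≤ deriv (mconjR ρ) uA :=
      deriv_lb hnn h0 h2 h3 ht₀ hρt₀ huA2
        (le_trans (le_max_left _ _) (le_max_right _ _))
    have hφA : nsq ((H - (-uA) • (1 : Matrix (Fin n) (Fin n) ℝ))⁻¹.mulVec g) < t₀/2 := by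
      have hb := phi_bound hpd g (show -uA < 0 by linarith)
      have hsA : Real.sqrt (nsq g/(t₀/2)) < uA :=
        lt_of_lt_of_le (lt_add_one _) (le_trans (le_max_right _ _) (le_max_right _ _))
      have huApos : (0:ℝ) < uA := by linarith
      have h2' : nsq g/(t₀/2) < uA^2 := (Real.sqrt_lt' huApos).1 hsA
      have h3' : nsq g < t₀/2 * uA^2 := by
        have := (div_lt_iff₀ (by linarith : (0:ℝ) < t₀/2)).1 h2'
        linarith [this]
      have h4' : nsq g / (-uA)^2 < t₀/2 := by
        rw [neg_pow, div_lt_iff₀ (by positivity : (0:ℝ) < (-1)^2 * uA^2)]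
        nlinarith
      exact lt_of_le_of_lt hb h4'
    -- the right endpoint via continuity of φ at 0
    have hφ0 : nsq ((H - (0:ℝ) • (1 : Matrix (Fin n) (Fin n) ℝ))⁻¹.mulVec g) = th := by
      rw [hth]; norm_num
    have hc0 : ContinuousWithinAt
        (fun l : ℝ => nsq ((H - l • (1 : Matrix (Fin n) (Fin n) ℝ))⁻¹.mulVec g)) (Iic 0) 0 :=
      (phi_contOn hpd g) 0 (mem_Iic.2 le_rfl)
    have hev : ∀ᶠ l in 𝓝[Iic 0] (0:ℝ),
        th - m₂ < nsq ((H - l • (1 : Matrix (Fin n) (Fin n) ℝ))⁻¹.mulVec g) := by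
      have h' : Tendsto (fun l : ℝ => nsq ((H - l • (1 : Matrix (Fin n) (Fin n) ℝ))⁻¹.mulVec g))
          (𝓝[Iic 0] 0) (𝓝 th) := by
        have := hc0
        rwa [ContinuousWithinAt, hφ0] at this
      exact h'.eventually (eventually_gt_nhds (by linarith))
    obtain ⟨δ₃, hδ₃, hb₃⟩ := Metric.mem_nhdsWithin_iff.1 hev
    set lb := -(min δ₃ (min uB 1))/2 with hlb
    have hmin : 0 < min δ₃ (min uB 1) := lt_min hδ₃ (lt_min huB one_pos)
    have hlb0 : lb < 0 := by rw [hlb]; linarith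
    have hlbm : -lb ≤ min δ₃ (min uB 1) := by rw [hlb]; linarith
    have hlbB : -lb ≤ uB :=
      le_trans hlbm (le_trans (min_le_right _ _) (min_le_left _ _))
    have hlb1 : -lb ≤ 1 :=
      le_trans hlbm (le_trans (min_le_right _ _) (min_le_right _ _))
    have hφb : th - m₂ < nsq ((H - lb • (1 : Matrix (Fin n) (Fin n) ℝ))⁻¹.mulVec g) := by
      apply hb₃
      constructor
      · rw [Metric.mem_ball, Real.dist_eq, sub_zero, abs_of_neg hlb0]
        have := min_le_left δ₃ (min uB 1)
        rw [hlb]; linarith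
      · exact mem_Iic.2 hlb0.le
    have hdb : deriv (mconjR ρ) (-lb) ≤ th - m₂ := by
      rw [hm₂def, hd]
      exact deriv_ub hnn h0 h2 h3 hthpos hu₀ hu₀lt (by linarith : (0:ℝ) < -lb)
        (by rw [← hd, ← huBdef]; exact hlbB)
    have hab : -uA < lb := by
      have : -lb ≤ 1 := hlb1
      linarith
    -- the function G for the intermediate value theorem
    set G := fun l : ℝ => nsq ((H - l • (1 : Matrix (Fin n) (Fin n) ℝ))⁻¹.mulVec g)
      - deriv (mconjR ρ) (-l) with hG
    have hGa : G (-uA) < 0 := by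
      rw [hG]
      simp only
      rw [neg_neg]
      linarith
    have hGb : 0 < G lb := by
      rw [hG]
      simp only
      linarith
    have hGcont : ContinuousOn G (Icc (-uA) lb) := by
      apply ContinuousOn.sub
      · exact (phi_contOn hpd g).mono (fun x hx => mem_Iic.2 (le_trans hx.2 hlb0.le))
      · intro l hl
        have hlneg : 0 < -l := by
          have := hl.2
          simp only [mem_Icc] at hl
          linarith [hl.2]
        have hca : ContinuousAt (fun l : ℝ => deriv (mconjR ρ) (-l)) l :=
          ContinuousAt.comp (deriv_mconjR_contAt hnn h0 h2 h3 hlneg)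
            (continuous_neg.continuousAt)
        exact hca.continuousWithinAt
    have h0mem : (0:ℝ) ∈ Icc (G (-uA)) (G lb) := ⟨hGa.le, hGb.le⟩
    obtain ⟨ls, hlsmem, hls0⟩ := intermediate_value_Icc hab.le hGcont h0mem
    have hls_neg : ls < 0 := lt_of_le_of_lt hlsmem.2 hlb0
    have hlseq : nsq ((H - ls • (1 : Matrix (Fin n) (Fin n) ℝ))⁻¹.mulVec g)
        = deriv (mconjR ρ) (-ls) := by
      have h' := hls0
      rw [hG] at h'
      simp only at h'
      linarith
    refine ⟨ls, ⟨hls_neg, hlseq, ?_⟩, ?_⟩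
    · -- optimality of xs = -(H - ls I)⁻¹ g
      intro y
      set u' := -ls with hu'def
      have hu' : 0 < u' := by rw [hu'def]; linarith
      set A := H - ls • (1 : Matrix (Fin n) (Fin n) ℝ) with hA
      have hPA : A.PosDef := posdef_shift hpd hls_neg.le
      set xs := -(A⁻¹.mulVec g) with hxs
      have hnsqxs : nsq xs = nsq (A⁻¹.mulVec g) := by simp [nsq, hxs]
      have hts : nsq xs = deriv (mconjR ρ) u' := by rw [hnsqxs]; exact hlseq
      have hder : HasDerivAt (mconjR ρ) (deriv (mconjR ρ) u') u' := (h3 u' hu').hasDerivAt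
      have hrule : ρ (nsq xs) ≤ ((u' * nsq xs - mconjR ρ u' : ℝ) : EReal) := by
        rw [hts]
        exact rho_le_of_deriv hnn h0 hlsc hmono h2 hu' hder
      have hshift : ∀ z : Fin n → ℝ,
          2*(g ⬝ᵥ z) + z ⬝ᵥ A *ᵥ z = quadObj g H z + u' * nsq z := by
        intro z
        have hmv : A *ᵥ z = H *ᵥ z - ls • z := by
          rw [hA, Matrix.sub_mulVec, Matrix.smul_mulVec, Matrix.one_mulVec]
        rw [hmv, dotProduct_sub, dotProduct_smul, quadObj, hu'def]
        simp only [nsq, smul_eq_mul]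
        ring
      have hq := quad_opt hPA g y
      rw [show (2 * (g ⬝ᵥ -(A⁻¹ *ᵥ g)) + -(A⁻¹ *ᵥ g) ⬝ᵥ A *ᵥ -(A⁻¹ *ᵥ g))
            = 2*(g ⬝ᵥ xs) + xs ⬝ᵥ A *ᵥ xs from rfl, hshift xs, hshift y] at hq
      calc ((quadObj g H xs : ℝ) : EReal) + ρ (nsq xs)
          ≤ ((quadObj g H xs : ℝ) : EReal) + ((u' * nsq xs - mconjR ρ u' : ℝ) : EReal) :=
            add_le_add_right hrule _
        _ = ((quadObj g H xs + (u' * nsq xs - mconjR ρ u') : ℝ) : EReal) := by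
            rw [EReal.coe_add]
        _ ≤ ((quadObj g H y + (u' * nsq y - mconjR ρ u') : ℝ) : EReal) := by
            apply EReal.coe_le_coe_iff.2
            linarith
        _ = ((quadObj g H y : ℝ) : EReal) + ((u' * nsq y - mconjR ρ u' : ℝ) : EReal) :=
            EReal.coe_add _ _
        _ ≤ ((quadObj g H y : ℝ) : EReal) + ρ (nsq y) :=
            add_le_add_right (FY hnn h0 h2 u' (nsq y) (nsq_nonneg y)) _
    · -- uniqueness
      intro l hl hEq
      by_contra hne
      have hmono' : MonotoneOn (deriv (mconjR ρ)) (Ioi 0) :=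
        (hcv.subset (subset_univ _) (convex_Ioi 0)).monotoneOn_deriv (fun x hx => h3 x hx)
      rcases lt_or_gt_of_ne hne with hlt | hgt
      · have hφlt := phi_strictMono hpd hg hlt hls_neg
        have hd' := hmono' (mem_Ioi.2 (by linarith : (0:ℝ) < -ls))
          (mem_Ioi.2 (by linarith : (0:ℝ) < -l)) (by linarith)
        rw [← hlseq, ← hEq] at hd'
        linarith
      · have hφlt := phi_strictMono hpd hg hgt hl
        have hd' := hmono' (mem_Ioi.2 (by linarith : (0:ℝ) < -l))
          (mem_Ioi.2 (by linarith : (0:ℝ) < -ls)) (by linarith)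
        rw [← hlseq, ← hEq] at hd'
        linarith


end
end

section
/- Let g ∈ ℝⁿ \ {0} and let H be a symmetric n×n real matrix. For t ∈ ℝ, let λ(t) denote the smallest eigenvalue of the (n+1)×(n+1) symmetric matrix B(t) := [[t, gᵀ],[g, H]], and set t̄ := lim_{λ↑λ_min(H)} [λ + gᵀ(H − λI)⁻¹g] ∈ (−∞, ∞]. Then t ↦ λ(t) is continuous on ℝ and differentiable on (−∞, t̄) ∪ (t̄, ∞). Moreover: (i) for t ∈ (t̄, ∞), λ(t) = λ_min(H); (ii) for t ∈ (−∞, t̄), λ(t) is the unique root of the equation t = λ + gᵀ(H − λI)⁻¹g on (−∞, λ_min(H)), and λ'(t) > 0. -/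
open Matrix Filter Set Topology

noncomputable section

set_option linter.unusedSectionVars false
set_option maxHeartbeats 1000000

variable {m : Type*} [Fintype m]

lemma abs_le_one_of_unit {x : m → ℝ} (hx : x ⬝ᵥ x = 1) (i : m) : |x i| ≤ 1 := by
  have h1 : x i ^ 2 ≤ x ⬝ᵥ x := by
    rw [dotProduct]
    have := Finset.single_le_sum (f := fun j => x j * x j)
      (fun j _ => mul_self_nonneg (x j)) (Finset.mem_univ i)
    simpa [pow_two] using this
  rw [hx] at h1
  nlinarith [abs_nonneg (x i), sq_abs (x i)]

lemma quad_lower {A : Matrix m m ℝ} {x : m → ℝ} (hx : x ⬝ᵥ x = 1) :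
    -(∑ i, ∑ j, |A i j|) ≤ x ⬝ᵥ A.mulVec x := by
  have : x ⬝ᵥ A.mulVec x = ∑ i, ∑ j, x i * (A i j * x j) := by
    simp [dotProduct, mulVec, Finset.mul_sum]
  rw [this, ← Finset.sum_neg_distrib]
  refine Finset.sum_le_sum fun i _ => ?_
  rw [← Finset.sum_neg_distrib]
  refine Finset.sum_le_sum fun j _ => ?_
  have h1 := abs_le_one_of_unit hx i
  have h2 := abs_le_one_of_unit hx j
  have : |x i * (A i j * x j)| ≤ |A i j| := by
    rw [abs_mul, abs_mul]
    nlinarith [abs_nonneg (A i j), abs_nonneg (x i), abs_nonneg (x j),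
      mul_nonneg (abs_nonneg (A i j)) (abs_nonneg (x j))]
  linarith [neg_abs_le (x i * (A i j * x j)), neg_le_neg this] 

lemma rayleigh_bddBelow (A : Matrix m m ℝ) :
    BddBelow (Set.range fun x : {x : m → ℝ // x ⬝ᵥ x = 1} =>
      (x : m → ℝ) ⬝ᵥ A.mulVec (x : m → ℝ)) := by
  refine ⟨-(∑ i, ∑ j, |A i j|), ?_⟩
  rintro y ⟨x, rfl⟩
  exact quad_lower x.2

lemma lambdaMin_le (A : Matrix m m ℝ) {x : m → ℝ} (hx : x ⬝ᵥ x = 1) :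
    lambdaMin A ≤ x ⬝ᵥ A.mulVec x :=
  ciInf_le (rayleigh_bddBelow A) ⟨x, hx⟩

end
noncomputable section
variable {m : Type*} [Fintype m]

lemma dotProduct_self_pos {x : m → ℝ} (hx : x ≠ 0) : 0 < x ⬝ᵥ x := by
  have h0 : (0:ℝ) ≤ x ⬝ᵥ x := by
    rw [dotProduct]; exact Finset.sum_nonneg fun i _ => mul_self_nonneg _
  rcases lt_or_eq_of_le h0 with h | h
  · exact h
  · exact absurd ((dotProduct_self_eq_zero).mp h.symm) hx

lemma rayleigh_ge (A : Matrix m m ℝ) (x : m → ℝ) :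
    lambdaMin A * (x ⬝ᵥ x) ≤ x ⬝ᵥ A.mulVec x := by
  rcases eq_or_ne x 0 with rfl | hx
  · simp
  · have hpos : 0 < x ⬝ᵥ x := dotProduct_self_pos hx
    set c : ℝ := (Real.sqrt (x ⬝ᵥ x))⁻¹ with hc
    have hs : Real.sqrt (x ⬝ᵥ x) ^ 2 = x ⬝ᵥ x := Real.sq_sqrt hpos.le
    have hsne : Real.sqrt (x ⬝ᵥ x) ≠ 0 := by positivity
    have hunit : (c • x) ⬝ᵥ (c • x) = 1 := by
      rw [smul_dotProduct, dotProduct_smul, smul_eq_mul, smul_eq_mul, ← mul_assoc, hc]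
      rw [← Real.sqrt_inv]
      rw [show (Real.sqrt (x ⬝ᵥ x)⁻¹ * Real.sqrt (x ⬝ᵥ x)⁻¹ : ℝ)
        = Real.sqrt (x ⬝ᵥ x)⁻¹ ^ 2 by ring, Real.sq_sqrt (by positivity)]
      field_simp
    have h1 := lambdaMin_le A hunit
    have h2 : (c • x) ⬝ᵥ A.mulVec (c • x) = c^2 * (x ⬝ᵥ A.mulVec x) := by
      rw [A.mulVec_smul, smul_dotProduct, dotProduct_smul, smul_eq_mul, smul_eq_mul]
      ring
    rw [h2] at h1
    have hc2 : c^2 = (x ⬝ᵥ x)⁻¹ := by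
      rw [hc, inv_pow, hs]
    rw [hc2] at h1
    calc lambdaMin A * (x ⬝ᵥ x) ≤ ((x ⬝ᵥ x)⁻¹ * (x ⬝ᵥ A.mulVec x)) * (x ⬝ᵥ x) := by
          exact mul_le_mul_of_nonneg_right h1 hpos.le
      _ = x ⬝ᵥ A.mulVec x := by field_simp

lemma exists_unit [Nonempty m] : ∃ x : m → ℝ, x ⬝ᵥ x = 1 := by
  obtain ⟨i⟩ := ‹Nonempty m›
  classical
  refine ⟨Pi.single i 1, ?_⟩
  simp [dotProduct, Pi.single_apply]

lemma continuous_quad (A : Matrix m m ℝ) :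
    Continuous fun x : m → ℝ => x ⬝ᵥ A.mulVec x := by
  have : (fun x : m → ℝ => x ⬝ᵥ A.mulVec x)
      = fun x => ∑ i, ∑ j, x i * (A i j * x j) := by
    funext x; simp [dotProduct, mulVec, Finset.mul_sum]
  rw [this]
  refine continuous_finset_sum _ fun i _ => continuous_finset_sum _ fun j _ => ?_
  exact ((continuous_apply i).mul (continuous_const.mul (continuous_apply j)))

lemma lambdaMin_attained [Nonempty m] (A : Matrix m m ℝ) :
    ∃ x : m → ℝ, x ⬝ᵥ x = 1 ∧ x ⬝ᵥ A.mulVec x = lambdaMin A := by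
  classical
  set S : Set (m → ℝ) := {x | x ⬝ᵥ x = 1} with hS
  have hcont : Continuous fun x : m → ℝ => x ⬝ᵥ x := by
    have : (fun x : m → ℝ => x ⬝ᵥ x) = fun x => ∑ i, x i * x i := by
      funext x; simp [dotProduct]
    rw [this]
    exact continuous_finset_sum _ fun i _ => (continuous_apply i).mul (continuous_apply i)
  have hclosed : IsClosed S := isClosed_eq hcont continuous_const
  have hbdd : Bornology.IsBounded S := by
    refine Metric.isBounded_iff_subset_closedBall 0 |>.mpr ⟨1, fun x hx => ?_⟩
    rw [Metric.mem_closedBall, dist_zero_right]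
    refine (pi_norm_le_iff_of_nonneg zero_le_one).mpr fun i => ?_
    simpa using abs_le_one_of_unit hx i
  have hcompact : IsCompact S := Metric.isCompact_of_isClosed_isBounded hclosed hbdd
  have hne : S.Nonempty := exists_unit
  obtain ⟨x₀, hx₀S, hmin⟩ := hcompact.exists_isMinOn hne (continuous_quad A).continuousOn
  haveI : Nonempty {x : m → ℝ // x ⬝ᵥ x = 1} := ⟨⟨x₀, hx₀S⟩⟩
  refine ⟨x₀, hx₀S, le_antisymm ?_ (lambdaMin_le A hx₀S)⟩
  exact le_ciInf fun y => hmin y.2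

variable {n : ℕ}

lemma cons_dot (a b : ℝ) (x y : Fin n → ℝ) :
    (Fin.cons a x : Fin (n+1) → ℝ) ⬝ᵥ (Fin.cons b y) = a * b + x ⬝ᵥ y := by
  simp [dotProduct, Fin.sum_univ_succ]

lemma Bmat_mulVec (g : Fin n → ℝ) (H : Matrix (Fin n) (Fin n) ℝ) (t a : ℝ) (x : Fin n → ℝ) :
    (Bmat g H t).mulVec (Fin.cons a x) =
      Fin.cons (t * a + g ⬝ᵥ x) (fun i => a * g i + H.mulVec x i) := by
  funext i
  refine Fin.cases ?_ ?_ i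
  · show (Fin.cons t g : Fin (n+1) → ℝ) ⬝ᵥ Fin.cons a x = _
    rw [cons_dot, Fin.cons_zero]
  · intro j
    show (Fin.cons (g j) (H j) : Fin (n+1) → ℝ) ⬝ᵥ Fin.cons a x = _
    rw [cons_dot, mul_comm (g j) a]
    rfl

lemma Bmat_quad (g : Fin n → ℝ) (H : Matrix (Fin n) (Fin n) ℝ) (t a : ℝ) (x : Fin n → ℝ) :
    (Fin.cons a x : Fin (n+1) → ℝ) ⬝ᵥ (Bmat g H t).mulVec (Fin.cons a x) =
      t * a^2 + 2 * a * (g ⬝ᵥ x) + x ⬝ᵥ H.mulVec x := by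
  rw [Bmat_mulVec, cons_dot]
  have : x ⬝ᵥ (fun i => a * g i + H.mulVec x i) = a * (x ⬝ᵥ g) + x ⬝ᵥ H.mulVec x := by
    simp only [dotProduct, Finset.mul_sum]
    rw [← Finset.sum_add_distrib]
    exact Finset.sum_congr rfl fun i _ => by ring
  rw [this, dotProduct_comm x g]
  ring

lemma lam_lipschitz (g : Fin n → ℝ) (H : Matrix (Fin n) (Fin n) ℝ) (s t : ℝ) :
    lambdaMin (Bmat g H t) ≤ lambdaMin (Bmat g H s) + |t - s| := by
  haveI : Nonempty {x : Fin (n+1) → ℝ // x ⬝ᵥ x = 1} := by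
    obtain ⟨x, hx⟩ := exists_unit (m := Fin (n+1)); exact ⟨⟨x, hx⟩⟩
  have key : ∀ q : {x : Fin (n+1) → ℝ // x ⬝ᵥ x = 1},
      lambdaMin (Bmat g H t) - |t - s| ≤ (q : Fin (n+1) → ℝ) ⬝ᵥ (Bmat g H s).mulVec q := by
    rintro ⟨q, hq⟩
    have hq' : (Fin.cons (q 0) (Fin.tail q) : Fin (n+1) → ℝ) = q := Fin.cons_self_tail q
    have h1 : q ⬝ᵥ (Bmat g H t).mulVec q - q ⬝ᵥ (Bmat g H s).mulVec q = (t - s) * (q 0)^2 := by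
      rw [← hq', Bmat_quad, Bmat_quad]; simp only [Fin.cons_zero]; ring
    have h2 : (q 0)^2 ≤ 1 := by
      have := abs_le_one_of_unit hq 0
      nlinarith [abs_nonneg (q 0), sq_abs (q 0)]
    have h3 : (t - s) * (q 0)^2 ≤ |t - s| := by
      rcases le_or_gt 0 (t - s) with h | h
      · calc (t-s) * (q 0)^2 ≤ (t-s) * 1 := by nlinarith [sq_nonneg (q 0)]
          _ ≤ |t - s| := by rw [mul_one]; exact le_abs_self _
      · calc (t-s) * (q 0)^2 ≤ 0 := by nlinarith [sq_nonneg (q 0)]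
          _ ≤ |t - s| := abs_nonneg _
    have h4 := lambdaMin_le (Bmat g H t) hq
    simp only at h1 h4 ⊢
    linarith
  have h : lambdaMin (Bmat g H t) - |t - s| ≤ lambdaMin (Bmat g H s) := le_ciInf key
  linarith

lemma lam_cont (g : Fin n → ℝ) (H : Matrix (Fin n) (Fin n) ℝ) :
    Continuous fun t => lambdaMin (Bmat g H t) := by
  have : LipschitzWith 1 fun t => lambdaMin (Bmat g H t) := by
    refine lipschitzWith_iff_dist_le_mul.mpr fun s t => ?_
    rw [Real.dist_eq, Real.dist_eq, NNReal.coe_one, one_mul]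
    rw [abs_le]
    constructor
    · linarith [lam_lipschitz g H s t, abs_sub_comm s t, le_abs_self (t - s), neg_abs_le (t-s)]
    · linarith [lam_lipschitz g H t s, le_abs_self (s - t), abs_sub_comm s t]
  exact this.continuous

lemma isSymm_isHermitian {A : Matrix m m ℝ} (h : A.IsSymm) : A.IsHermitian := by
  unfold Matrix.IsHermitian
  rw [Matrix.conjTranspose_eq_transpose_of_trivial]
  exact h

lemma sub_smul_one_mulVec [DecidableEq m] (A : Matrix m m ℝ) (l : ℝ) (x : m → ℝ) :
    (A - l • (1 : Matrix m m ℝ)).mulVec x = A.mulVec x - l • x := by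
  rw [sub_mulVec, smul_mulVec, one_mulVec]

lemma P_posdef [DecidableEq m] {A : Matrix m m ℝ} (hA : A.IsSymm) {l : ℝ}
    (hl : l < lambdaMin A) : (A - l • (1 : Matrix m m ℝ)).PosDef := by
  refine Matrix.PosDef.of_dotProduct_mulVec_pos ?_ ?_
  · exact isSymm_isHermitian (by
      rw [Matrix.IsSymm, transpose_sub, transpose_smul, transpose_one, hA])
  · intro x hx
    have h1 := rayleigh_ge A x
    have h2 : 0 < x ⬝ᵥ x := dotProduct_self_pos hx
    rw [star_trivial, sub_smul_one_mulVec, dotProduct_sub, dotProduct_smul, smul_eq_mul]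
    nlinarith

lemma P_mulVec_inv [DecidableEq m] {A : Matrix m m ℝ} (hA : A.PosDef) (v : m → ℝ) :
    A.mulVec (A⁻¹.mulVec v) = v := by
  rw [mulVec_mulVec, Matrix.mul_nonsing_inv _ ((Matrix.isUnit_iff_isUnit_det A).mp hA.isUnit),
    one_mulVec]

lemma P_inv_mulVec [DecidableEq m] {A : Matrix m m ℝ} (hA : A.PosDef) (v : m → ℝ) :
    A⁻¹.mulVec (A.mulVec v) = v := by
  rw [mulVec_mulVec, Matrix.nonsing_inv_mul _ ((Matrix.isUnit_iff_isUnit_det A).mp hA.isUnit),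
    one_mulVec]

lemma symm_dot_s11 {A : Matrix m m ℝ} (hA : A.IsSymm) (x y : m → ℝ) :
    x ⬝ᵥ A.mulVec y = A.mulVec x ⬝ᵥ y := by
  rw [dotProduct_mulVec, ← Matrix.mulVec_transpose, hA, dotProduct_comm, dotProduct_comm y]

set_option linter.unusedSectionVars false

def phi {n : ℕ} (g : Fin n → ℝ) (H : Matrix (Fin n) (Fin n) ℝ) (l : ℝ) : ℝ :=
  l + g ⬝ᵥ ((H - l • (1 : Matrix (Fin n) (Fin n) ℝ))⁻¹).mulVec g

variable {g : Fin n → ℝ} {H : Matrix (Fin n) (Fin n) ℝ}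

lemma posdef_nonneg [DecidableEq m] {A : Matrix m m ℝ} (hA : A.PosDef) (v : m → ℝ) :
    0 ≤ v ⬝ᵥ A.mulVec v := by
  rcases eq_or_ne v 0 with rfl | hv
  · simp
  · have := hA.dotProduct_mulVec_pos hv
    rw [star_trivial] at this
    exact this.le

lemma P_symm (hH : H.IsSymm) (l : ℝ) : (H - l • (1 : Matrix (Fin n) (Fin n) ℝ)).IsSymm := by
  rw [Matrix.IsSymm, transpose_sub, transpose_smul, transpose_one, hH]

lemma Pinv_symm (hH : H.IsSymm) (l : ℝ) :
    ((H - l • (1 : Matrix (Fin n) (Fin n) ℝ))⁻¹).IsSymm := by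
  rw [Matrix.IsSymm, Matrix.transpose_nonsing_inv, P_symm hH l]

section secular

variable (hH : H.IsSymm) {l : ℝ} (hl : l < lambdaMin H)

lemma P_mul_z (hH : H.IsSymm) {l : ℝ} (hl : l < lambdaMin H) :
    (H - l • (1 : Matrix (Fin n) (Fin n) ℝ)).mulVec
      (((H - l • (1 : Matrix (Fin n) (Fin n) ℝ))⁻¹).mulVec g) = g :=
  P_mulVec_inv (P_posdef hH hl) g

lemma gz_eq (hH : H.IsSymm) {l : ℝ} (hl : l < lambdaMin H) :
    g ⬝ᵥ (((H - l • (1 : Matrix (Fin n) (Fin n) ℝ))⁻¹).mulVec g)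
      = (((H - l • (1:Matrix (Fin n) (Fin n) ℝ))⁻¹).mulVec g) ⬝ᵥ
        ((H - l • (1:Matrix (Fin n) (Fin n) ℝ)).mulVec
          (((H - l • (1:Matrix (Fin n) (Fin n) ℝ))⁻¹).mulVec g)) := by
  rw [P_mul_z hH hl, dotProduct_comm]

lemma gz_nonneg (hH : H.IsSymm) {l : ℝ} (hl : l < lambdaMin H) :
    0 ≤ g ⬝ᵥ (((H - l • (1 : Matrix (Fin n) (Fin n) ℝ))⁻¹).mulVec g) := by
  rw [gz_eq hH hl]
  exact posdef_nonneg (P_posdef hH hl) _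

lemma secular_eq (hH : H.IsSymm) {l : ℝ} (hl : l < lambdaMin H) :
    lambdaMin (Bmat g H (phi g H l)) = l := by
  classical
  set P : Matrix (Fin n) (Fin n) ℝ := H - l • 1 with hP
  set z : Fin n → ℝ := (P⁻¹).mulVec g with hz
  have hPz : P.mulVec z = g := P_mul_z hH hl
  have hPsymm : P.IsSymm := P_symm hH l
  have hPpd : P.PosDef := P_posdef hH hl
  have hgz : g ⬝ᵥ z = z ⬝ᵥ P.mulVec z := gz_eq hH hl
  have ht : phi g H l = l + g ⬝ᵥ z := rfl
  -- lower bound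
  have hlow : ∀ q : {x : Fin (n+1) → ℝ // x ⬝ᵥ x = 1},
      l ≤ (q : Fin (n+1) → ℝ) ⬝ᵥ (Bmat g H (phi g H l)).mulVec q := by
    rintro ⟨q, hq⟩
    set a : ℝ := q 0
    set x : Fin n → ℝ := Fin.tail q
    have hq' : (Fin.cons a x : Fin (n+1) → ℝ) = q := Fin.cons_self_tail q
    have hqq : a^2 + x ⬝ᵥ x = 1 := by
      rw [← hq'] at hq; rw [← hq, cons_dot]; ring
    have hquad : q ⬝ᵥ (Bmat g H (phi g H l)).mulVec q =
        (phi g H l) * a^2 + 2 * a * (g ⬝ᵥ x) + x ⬝ᵥ H.mulVec x := by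
      rw [← hq', Bmat_quad]
    have hsq : 0 ≤ (x + a • z) ⬝ᵥ P.mulVec (x + a • z) := posdef_nonneg hPpd _
    have hexp : (x + a • z) ⬝ᵥ P.mulVec (x + a • z)
        = x ⬝ᵥ P.mulVec x + 2 * a * (g ⬝ᵥ x) + a^2 * (g ⬝ᵥ z) := by
      have h1 : z ⬝ᵥ P.mulVec x = g ⬝ᵥ x := by
        rw [symm_dot_s11 hPsymm, hPz]
      have h2 : x ⬝ᵥ P.mulVec z = g ⬝ᵥ x := by
        rw [hPz, dotProduct_comm]
      have h3 : z ⬝ᵥ P.mulVec z = g ⬝ᵥ z := hgz.symm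
      simp only [Matrix.mulVec_add, Matrix.mulVec_smul, dotProduct_add, add_dotProduct,
        dotProduct_smul, smul_dotProduct, smul_eq_mul, h1, h2, h3]
      ring
    have hPx : x ⬝ᵥ P.mulVec x = x ⬝ᵥ H.mulVec x - l * (x ⬝ᵥ x) := by
      rw [hP, sub_smul_one_mulVec, dotProduct_sub, dotProduct_smul, smul_eq_mul]
    rw [hquad, ht]
    rw [hexp, hPx] at hsq
    have hql : l * (a^2 + x ⬝ᵥ x) = l := by rw [hqq, mul_one]
    nlinarith [hsq, hql]
  -- upper bound: explicit minimizer
  have hs2 : (0:ℝ) < 1 + z ⬝ᵥ z := by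
    have h0 : (0:ℝ) ≤ z ⬝ᵥ z := by
      rw [dotProduct]; exact Finset.sum_nonneg fun i _ => mul_self_nonneg _
    linarith
  set s : ℝ := Real.sqrt (1 + z ⬝ᵥ z) with hsdef
  have hs : s^2 = 1 + z ⬝ᵥ z := Real.sq_sqrt hs2.le
  have hsne : s ≠ 0 := by positivity
  set u : Fin (n+1) → ℝ := Fin.cons s⁻¹ (-(s⁻¹ • z)) with hu
  have huu : u ⬝ᵥ u = 1 := by
    rw [hu, cons_dot, dotProduct_neg, neg_dotProduct, neg_neg,
      smul_dotProduct, dotProduct_smul, smul_eq_mul, smul_eq_mul]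
    field_simp
    linarith [hs]
  have hzHz : z ⬝ᵥ H.mulVec z = g ⬝ᵥ z + l * (z ⬝ᵥ z) := by
    have : z ⬝ᵥ P.mulVec z = z ⬝ᵥ H.mulVec z - l * (z ⬝ᵥ z) := by
      rw [hP, sub_smul_one_mulVec, dotProduct_sub, dotProduct_smul, smul_eq_mul]
    rw [← hgz] at this
    linarith
  have huval : u ⬝ᵥ (Bmat g H (phi g H l)).mulVec u = l := by
    rw [hu, Bmat_quad]
    rw [dotProduct_neg, neg_dotProduct, Matrix.mulVec_neg, dotProduct_neg, neg_neg,
      dotProduct_smul, smul_dotProduct, Matrix.mulVec_smul, dotProduct_smul,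
      smul_eq_mul, smul_eq_mul, smul_eq_mul]
    rw [hzHz, ht]
    have h5 : s⁻¹^2 * (1 + z ⬝ᵥ z) = 1 := by
      field_simp
      linarith [hs]
    have hthis : l * (s⁻¹^2 * (1 + z ⬝ᵥ z)) = l * 1 := by rw [h5]
    rw [mul_one] at hthis
    nlinarith [hthis]
  haveI : Nonempty {x : Fin (n+1) → ℝ // x ⬝ᵥ x = 1} := by
    obtain ⟨x, hx⟩ := exists_unit (m := Fin (n+1)); exact ⟨⟨x, hx⟩⟩
  refine le_antisymm ?_ (le_ciInf hlow)
  have h6 := lambdaMin_le (Bmat g H (phi g H l)) huu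
  rw [huval] at h6
  exact h6

end secular

section diffble
variable [DecidableEq m]

lemma differentiableAt_det {M : ℝ → Matrix m m ℝ} {l0 : ℝ}
    (h : ∀ i j, DifferentiableAt ℝ (fun l => M l i j) l0) :
    DifferentiableAt ℝ (fun l => (M l).det) l0 := by
  classical
  have heq : (fun l => (M l).det)
      = fun l => ∑ σ : Equiv.Perm m, ((Equiv.Perm.sign σ : ℤ) : ℝ) * ∏ i, M l (σ i) i := by
    funext l
    rw [Matrix.det_apply]
    simp [Units.smul_def, zsmul_eq_mul]
  rw [heq]
  refine DifferentiableAt.fun_sum fun σ _ => ((DifferentiableAt.fun_finsetProd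
    (u := Finset.univ) (f := fun i l => M l (σ i) i) fun i _ => h (σ i) i)).const_mul _

lemma differentiableAt_adjugate {M : ℝ → Matrix m m ℝ} {l0 : ℝ}
    (h : ∀ i j, DifferentiableAt ℝ (fun l => M l i j) l0) (i j : m) :
    DifferentiableAt ℝ (fun l => (M l).adjugate i j) l0 := by
  have heq : (fun l => (M l).adjugate i j)
      = fun l => ((M l).updateRow j (Pi.single i 1)).det := by
    funext l; rw [Matrix.adjugate_apply]
  rw [heq]
  refine differentiableAt_det fun a b => ?_
  rcases eq_or_ne a j with rfl | ha
  · simp only [Matrix.updateRow_self]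
    exact differentiableAt_const _
  · simp only [Matrix.updateRow_ne ha]
    exact h a b

end diffble

lemma Mentry_diffAt (H : Matrix (Fin n) (Fin n) ℝ) (l0 : ℝ) (i j : Fin n) :
    DifferentiableAt ℝ (fun l : ℝ => (H - l • (1 : Matrix (Fin n) (Fin n) ℝ)) i j) l0 := by
  have : (fun l : ℝ => (H - l • (1 : Matrix (Fin n) (Fin n) ℝ)) i j)
      = fun l => H i j - l * (1 : Matrix (Fin n) (Fin n) ℝ) i j := by
    funext l; simp [Matrix.sub_apply, Matrix.smul_apply, smul_eq_mul]
  rw [this]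
  exact (differentiableAt_const _).sub (differentiableAt_id.mul_const _)

lemma phi_eq (g : Fin n → ℝ) (H : Matrix (Fin n) (Fin n) ℝ) : phi g H
    = fun l => l + ((H - l • (1 : Matrix (Fin n) (Fin n) ℝ)).det)⁻¹ *
        (g ⬝ᵥ ((H - l • (1 : Matrix (Fin n) (Fin n) ℝ)).adjugate).mulVec g) := by
  funext l
  simp only [phi, Matrix.inv_def, Ring.inverse_eq_inv', Matrix.smul_mulVec,
    dotProduct_smul, smul_eq_mul]

lemma phi_diffAt (hH : H.IsSymm) {l0 : ℝ} (hl0 : l0 < lambdaMin H) :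
    DifferentiableAt ℝ (phi g H) l0 := by
  classical
  rw [phi_eq]
  have hdet : DifferentiableAt ℝ
      (fun l => (H - l • (1 : Matrix (Fin n) (Fin n) ℝ)).det) l0 :=
    differentiableAt_det (fun i j => Mentry_diffAt H l0 i j)
  have hdetne : (H - l0 • (1 : Matrix (Fin n) (Fin n) ℝ)).det ≠ 0 :=
    (P_posdef hH hl0).det_pos.ne'
  have hadj : DifferentiableAt ℝ
      (fun l => g ⬝ᵥ ((H - l • (1 : Matrix (Fin n) (Fin n) ℝ)).adjugate).mulVec g) l0 := by
    have : (fun l : ℝ => g ⬝ᵥ ((H - l • (1 : Matrix (Fin n) (Fin n) ℝ)).adjugate).mulVec g)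
        = fun l : ℝ => ∑ i, ∑ j, g i *
            ((H - l • (1 : Matrix (Fin n) (Fin n) ℝ)).adjugate i j * g j) := by
      funext l; simp [dotProduct, mulVec, Finset.mul_sum]
    rw [this]
    refine DifferentiableAt.fun_sum fun i _ => DifferentiableAt.fun_sum fun j _ => ?_
    exact ((differentiableAt_adjugate (fun a b => Mentry_diffAt H l0 a b) i j).mul_const
      _).const_mul _
  exact differentiableAt_id.add ((hdet.inv hdetne).mul hadj)

lemma phi_contOn_s11 (hH : H.IsSymm) : ContinuousOn (phi g H) (Iio (lambdaMin H)) :=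
  fun l hl => ((phi_diffAt hH hl).continuousAt).continuousWithinAt

lemma phi_gap (hH : H.IsSymm) {l l' : ℝ} (hll' : l ≤ l') (hl' : l' < lambdaMin H) :
    phi g H l + (l' - l) ≤ phi g H l' := by
  classical
  have hl : l < lambdaMin H := lt_of_le_of_lt hll' hl'
  set A : Matrix (Fin n) (Fin n) ℝ := H - l • 1 with hA
  set A' : Matrix (Fin n) (Fin n) ℝ := H - l' • 1 with hA'
  set δ : ℝ := l' - l with hδ
  have hApd : A.PosDef := P_posdef hH hl
  have hA'pd : A'.PosDef := P_posdef hH hl'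
  have hA'symm : A'.IsSymm := P_symm hH l'
  set z : Fin n → ℝ := A⁻¹.mulVec g with hz
  set w : Fin n → ℝ := A'⁻¹.mulVec g with hw
  have hAz : A.mulVec z = g := P_mulVec_inv hApd g
  have hA'w : A'.mulVec w = g := P_mulVec_inv hA'pd g
  have hAA' : A' = A - δ • (1 : Matrix (Fin n) (Fin n) ℝ) := by
    rw [hA, hA', hδ, sub_smul]; abel
  have hA'z : A'.mulVec z = g - δ • z := by
    rw [hAA', sub_smul_one_mulVec, hAz]
  have hwz : w = z + δ • A'⁻¹.mulVec z := by
    have : A'.mulVec (z + δ • A'⁻¹.mulVec z) = g := by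
      rw [Matrix.mulVec_add, Matrix.mulVec_smul, P_mulVec_inv hA'pd, hA'z]
      abel
    calc w = A'⁻¹.mulVec (A'.mulVec (z + δ • A'⁻¹.mulVec z)) := by rw [this]
      _ = z + δ • A'⁻¹.mulVec z := P_inv_mulVec hA'pd _
  have hkey : g ⬝ᵥ A'⁻¹.mulVec z = z ⬝ᵥ z + δ * (z ⬝ᵥ A'⁻¹.mulVec z) := by
    have h1 : g ⬝ᵥ A'⁻¹.mulVec z = w ⬝ᵥ A'.mulVec (A'⁻¹.mulVec z) := by
      conv_lhs => rw [← hA'w]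
      rw [symm_dot_s11 hA'symm]
    rw [h1, P_mulVec_inv hA'pd, hwz, add_dotProduct, smul_dotProduct, smul_eq_mul,
      dotProduct_comm (A'⁻¹.mulVec z) z]
  have hpos : 0 ≤ z ⬝ᵥ A'⁻¹.mulVec z := posdef_nonneg hA'pd.inv z
  have hzz : 0 ≤ z ⬝ᵥ z := by
    rw [dotProduct]; exact Finset.sum_nonneg fun i _ => mul_self_nonneg _
  have hδ0 : 0 ≤ δ := by rw [hδ]; linarith
  have hgw : g ⬝ᵥ w = g ⬝ᵥ z + δ * (g ⬝ᵥ A'⁻¹.mulVec z) := by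
    rw [hwz, dotProduct_add, dotProduct_smul, smul_eq_mul]
  have : phi g H l' = l' + g ⬝ᵥ w := rfl
  rw [this]
  have : phi g H l = l + g ⬝ᵥ z := rfl
  rw [this, hgw, hkey]
  nlinarith [mul_nonneg hδ0 hzz, mul_nonneg (mul_nonneg hδ0 hδ0) hpos]

lemma phi_strictMonoOn (hH : H.IsSymm) : StrictMonoOn (phi g H) (Iio (lambdaMin H)) := by
  intro l hl l' hl' hll'
  have := phi_gap (g := g) hH hll'.le hl'
  linarith

lemma phi_upper (hH : H.IsSymm) (hg : g ≠ 0) {l : ℝ} (hl : l < lambdaMin H) :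
    phi g H l ≤ l + (g ⬝ᵥ g) / (lambdaMin H - l) := by
  classical
  set A : Matrix (Fin n) (Fin n) ℝ := H - l • 1 with hA
  set z : Fin n → ℝ := A⁻¹.mulVec g with hz
  have hApd : A.PosDef := P_posdef hH hl
  have hAz : A.mulVec z = g := P_mulVec_inv hApd g
  have hd0 : 0 < lambdaMin H - l := by linarith
  set c : ℝ := g ⬝ᵥ z with hc
  set G : ℝ := g ⬝ᵥ g with hG
  set Z : ℝ := z ⬝ᵥ z with hZ
  have hc0 : 0 ≤ c := gz_nonneg hH hl
  have hG0 : 0 ≤ G := by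
    rw [hG, dotProduct]; exact Finset.sum_nonneg fun i _ => mul_self_nonneg _
  have hZ0 : 0 ≤ Z := by
    rw [hZ, dotProduct]; exact Finset.sum_nonneg fun i _ => mul_self_nonneg _
  have h1 : (lambdaMin H - l) * Z ≤ c := by
    have hray := rayleigh_ge H z
    have hAq : z ⬝ᵥ A.mulVec z = z ⬝ᵥ H.mulVec z - l * Z := by
      rw [hA, sub_smul_one_mulVec, dotProduct_sub, dotProduct_smul, smul_eq_mul, hZ]
    have hczA : c = z ⬝ᵥ A.mulVec z := gz_eq hH hl
    rw [hczA, hAq]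
    have : lambdaMin H * Z ≤ z ⬝ᵥ H.mulVec z := by rw [hZ]; exact hray
    nlinarith
  have h2 : c^2 ≤ G * Z := by
    have hcs := Finset.sum_mul_sq_le_sq_mul_sq Finset.univ g z
    have e1 : c = ∑ i, g i * z i := by rw [hc, dotProduct]
    have e2 : G = ∑ i, g i ^ 2 := by rw [hG, dotProduct]; exact Finset.sum_congr rfl fun i _ => (sq (g i)).symm
    have e3 : Z = ∑ i, z i ^ 2 := by rw [hZ, dotProduct]; exact Finset.sum_congr rfl fun i _ => (sq (z i)).symm
    rw [e1, e2, e3]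
    exact hcs
  have hgoal : c * (lambdaMin H - l) ≤ G := by
    rcases eq_or_lt_of_le hc0 with h | h
    · rw [← h]; simpa using hG0
    · nlinarith [h1, h2, mul_pos h hd0]
  have hfin : c ≤ G / (lambdaMin H - l) := (le_div_iff₀ hd0).mpr hgoal
  have hphi : phi g H l = l + c := rfl
  rw [hphi]
  linarith

lemma psd_kernel {A : Matrix m m ℝ} (hA : A.IsSymm) (hpsd : ∀ v, 0 ≤ v ⬝ᵥ A.mulVec v)
    {q : m → ℝ} (hq : q ⬝ᵥ A.mulVec q = 0) : A.mulVec q = 0 := by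
  have key : ∀ p : m → ℝ, p ⬝ᵥ A.mulVec q = 0 := by
    intro p
    set a : ℝ := p ⬝ᵥ A.mulVec q with ha
    set b : ℝ := p ⬝ᵥ A.mulVec p with hb
    have hb0 : 0 ≤ b := hpsd p
    have hexp : ∀ ε : ℝ, 0 ≤ 2 * ε * a + ε^2 * b := by
      intro ε
      have h0 := hpsd (q + ε • p)
      have hqp : q ⬝ᵥ A.mulVec p = a := by
        rw [ha, symm_dot_s11 hA q p, dotProduct_comm]
      have : (q + ε • p) ⬝ᵥ A.mulVec (q + ε • p)
          = q ⬝ᵥ A.mulVec q + ε * (q ⬝ᵥ A.mulVec p) + ε * (p ⬝ᵥ A.mulVec q) + ε^2 * b := by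
        rw [Matrix.mulVec_add, Matrix.mulVec_smul]
        simp only [dotProduct_add, add_dotProduct, dotProduct_smul, smul_dotProduct, smul_eq_mul,
          hb]
        ring
      rw [this, hq, hqp, ← ha] at h0
      linarith
    have hsq : a^2 * (b + 2) ≤ 0 := by
      have h1 := hexp (-a/(b+1))
      have hb1 : (0:ℝ) < b + 1 := by linarith
      have h2 : (2 * (-a/(b+1)) * a + (-a/(b+1))^2 * b) * (b+1)^2
          = -(a^2 * (b+2)) := by
        field_simp
        ring
      nlinarith [h1, hb1, sq_nonneg (b+1)]
    have : a^2 ≤ 0 := by nlinarith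
    have : a = 0 := by nlinarith [sq_nonneg a]
    exact this
  have := key (A.mulVec q)
  exact dotProduct_self_eq_zero.mp this

lemma Bmat_symm (hH : H.IsSymm) (t : ℝ) : (Bmat g H t).IsSymm := by
  rw [Matrix.IsSymm]
  ext i j
  rw [Matrix.transpose_apply]
  refine Fin.cases ?_ ?_ i <;> [skip; intro i'] <;> refine Fin.cases ?_ ?_ j <;>
    try intro j'
  · rfl
  · show (Fin.cons (g j') (H j') : Fin (n+1) → ℝ) 0 = (Fin.cons t g : Fin (n+1) → ℝ) j'.succ
    simp
  · show (Fin.cons t g : Fin (n+1) → ℝ) i'.succ = (Fin.cons (g i') (H i') : Fin (n+1) → ℝ) 0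
    simp
  · show (Fin.cons (g j') (H j') : Fin (n+1) → ℝ) i'.succ
      = (Fin.cons (g i') (H i') : Fin (n+1) → ℝ) j'.succ
    simp only [Fin.cons_succ]
    have := congrFun (congrFun hH j') i'
    rw [Matrix.transpose_apply] at this
    exact this.symm

lemma secular_of_lam_lt (hH : H.IsSymm) {t : ℝ}
    (h : lambdaMin (Bmat g H t) < lambdaMin H) : t = phi g H (lambdaMin (Bmat g H t)) := by
  classical
  set l : ℝ := lambdaMin (Bmat g H t) with hldef
  set P : Matrix (Fin n) (Fin n) ℝ := H - l • 1 with hP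
  have hPpd : P.PosDef := P_posdef hH h
  set z : Fin n → ℝ := P⁻¹.mulVec g with hz
  have hPz : P.mulVec z = g := P_mulVec_inv hPpd g
  set B : Matrix (Fin (n+1)) (Fin (n+1)) ℝ := Bmat g H t with hB
  set M : Matrix (Fin (n+1)) (Fin (n+1)) ℝ := B - l • 1 with hM
  have hMsymm : M.IsSymm := by
    rw [hM, Matrix.IsSymm, transpose_sub, transpose_smul, transpose_one, Bmat_symm hH t]
  have hMpsd : ∀ v, 0 ≤ v ⬝ᵥ M.mulVec v := by
    intro v
    rw [hM, sub_smul_one_mulVec, dotProduct_sub, dotProduct_smul, smul_eq_mul]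
    have := rayleigh_ge B v
    linarith
  obtain ⟨q, hq1, hq2⟩ := lambdaMin_attained B
  have hqM : q ⬝ᵥ M.mulVec q = 0 := by
    rw [hM, sub_smul_one_mulVec, dotProduct_sub, dotProduct_smul, smul_eq_mul, hq1, hq2, mul_one,
      sub_self]
  have hker : M.mulVec q = 0 := psd_kernel hMsymm hMpsd hqM
  have hBq : B.mulVec q = l • q := by
    rw [hM, sub_smul_one_mulVec] at hker
    have := sub_eq_zero.mp hker
    exact this
  set a : ℝ := q 0 with hadef
  set x : Fin n → ℝ := Fin.tail q with hxdef
  have hq' : (Fin.cons a x : Fin (n+1) → ℝ) = q := Fin.cons_self_tail q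
  have hBq' : B.mulVec (Fin.cons a x) = l • (Fin.cons a x : Fin (n+1) → ℝ) := by
    rw [hq']; exact hBq
  rw [hB, Bmat_mulVec] at hBq'
  have hrow0 : t * a + g ⬝ᵥ x = l * a := by
    have := congrFun hBq' 0
    simpa using this
  have hrows : ∀ i : Fin n, a * g i + H.mulVec x i = l * x i := by
    intro i
    have := congrFun hBq' i.succ
    simpa using this
  have hPx : P.mulVec x = (-a) • g := by
    funext i
    rw [hP, sub_smul_one_mulVec]
    have := hrows i
    simp only [Pi.sub_apply, Pi.smul_apply, smul_eq_mul]
    linarith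
  have hane : a ≠ 0 := by
    intro ha0
    have hx0 : x = 0 := by
      have : x = P⁻¹.mulVec (P.mulVec x) := (P_inv_mulVec hPpd x).symm
      rw [hPx, ha0, neg_zero, zero_smul, Matrix.mulVec_zero] at this
      exact this
    have : q = 0 := by
      rw [← hq', hx0, ha0]
      funext i
      refine Fin.cases ?_ ?_ i <;> simp
    rw [this] at hq1
    simp at hq1
  have hxz : x = (-a) • z := by
    have : x = P⁻¹.mulVec (P.mulVec x) := (P_inv_mulVec hPpd x).symm
    rw [hPx, Matrix.mulVec_smul] at this
    rw [this, hz]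
  have hgx : g ⬝ᵥ x = -a * (g ⬝ᵥ z) := by
    rw [hxz, dotProduct_smul, smul_eq_mul]
  have hphi : phi g H l = l + g ⬝ᵥ z := rfl
  rw [hphi]
  have : t * a = (l + g ⬝ᵥ z) * a := by
    rw [hgx] at hrow0; ring_nf; ring_nf at hrow0; linarith
  exact mul_right_cancel₀ hane this

lemma lam_le_lamH [Nonempty (Fin n)] (g : Fin n → ℝ) (H : Matrix (Fin n) (Fin n) ℝ) (t : ℝ) :
    lambdaMin (Bmat g H t) ≤ lambdaMin H := by
  obtain ⟨x, hx1, hx2⟩ := lambdaMin_attained H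
  have hunit : (Fin.cons 0 x : Fin (n+1) → ℝ) ⬝ᵥ (Fin.cons 0 x : Fin (n+1) → ℝ) = 1 := by
    rw [cons_dot, hx1]; ring
  have := lambdaMin_le (Bmat g H t) hunit
  rw [Bmat_quad] at this
  rw [← hx2]
  calc lambdaMin (Bmat g H t) ≤ t * 0^2 + 2 * 0 * (g ⬝ᵥ x) + x ⬝ᵥ H.mulVec x := this
    _ = x ⬝ᵥ H.mulVec x := by ring


theorem stmt11 {n : ℕ} (g : Fin n → ℝ) (hg : g ≠ 0)
    (H : Matrix (Fin n) (Fin n) ℝ) (hH : H.IsSymm)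
    (lam : ℝ → ℝ) (hlam : lam = fun t => lambdaMin (Bmat g H t))
    (tb : EReal)
    (htb : Filter.Tendsto (fun l : ℝ =>
        (((l + g ⬝ᵥ ((H - l • (1 : Matrix (Fin n) (Fin n) ℝ))⁻¹).mulVec g) : ℝ) : EReal))
      (nhdsWithin (lambdaMin H) (Iio (lambdaMin H))) (nhds tb)) :
    Continuous lam ∧ (∀ t : ℝ, (t : EReal) ≠ tb → DifferentiableAt ℝ lam t) ∧
      (∀ t : ℝ, tb < (t : EReal) → lam t = lambdaMin H) ∧
      (∀ t : ℝ, (t : EReal) < tb →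
        (lam t < lambdaMin H ∧
            t = lam t + g ⬝ᵥ ((H - lam t • (1 : Matrix (Fin n) (Fin n) ℝ))⁻¹).mulVec g ∧
            ∀ l : ℝ, l < lambdaMin H →
              t = l + g ⬝ᵥ ((H - l • (1 : Matrix (Fin n) (Fin n) ℝ))⁻¹).mulVec g → l = lam t) ∧
          0 < deriv lam t) := by
  classical
  subst hlam
  haveI hne : Nonempty (Fin n) := by
    by_contra h
    exact hg (funext fun i => absurd ⟨i⟩ h)
  set lam : ℝ → ℝ := fun t => lambdaMin (Bmat g H t) with hlamdef
  have htb' : Tendsto (fun l : ℝ => ((phi g H l : ℝ) : EReal))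
      (𝓝[<] (lambdaMin H)) (𝓝 tb) := htb
  have hcont : Continuous lam := lam_cont g H
  have hlamle : ∀ t, lam t ≤ lambdaMin H := lam_le_lamH g H
  have hsec : ∀ l, l < lambdaMin H → lam (phi g H l) = l := fun l hl => secular_eq hH hl
  have hmono := phi_strictMonoOn (g := g) hH
  -- phi l < tb
  have hphi_lt_tb : ∀ l, l < lambdaMin H → ((phi g H l : ℝ) : EReal) < tb := by
    intro l hl
    set l' : ℝ := (l + lambdaMin H) / 2 with hl'def
    have hll' : l < l' := by rw [hl'def]; linarith
    have hl' : l' < lambdaMin H := by rw [hl'def]; linarith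
    have hev : ∀ᶠ μ in 𝓝[<] (lambdaMin H), ((phi g H l' : ℝ) : EReal) ≤ ((phi g H μ : ℝ) : EReal) := by
      filter_upwards [Ico_mem_nhdsLT_of_mem (Set.mem_Ioc.mpr ⟨hl', le_refl _⟩)] with μ hμ
      rcases eq_or_lt_of_le hμ.1 with rfl | hlt
      · exact le_refl _
      · exact EReal.coe_le_coe_iff.mpr (hmono (Set.mem_Iio.mpr hl') (Set.mem_Iio.mpr hμ.2) hlt).le
    have h1 : ((phi g H l' : ℝ) : EReal) ≤ tb := ge_of_tendsto htb' hev
    have h2 : ((phi g H l : ℝ) : EReal) < ((phi g H l' : ℝ) : EReal) :=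
      EReal.coe_lt_coe_iff.mpr (hmono (Set.mem_Iio.mpr (lt_trans hll' hl')) (Set.mem_Iio.mpr hl') hll')
    exact lt_of_lt_of_le h2 h1
  -- existence of preimage
  have hexists : ∀ t : ℝ, (t : EReal) < tb → ∃ l, l < lambdaMin H ∧ phi g H l = t := by
    intro t ht
    have hev : ∀ᶠ μ in 𝓝[<] (lambdaMin H), (t : EReal) < ((phi g H μ : ℝ) : EReal) :=
      htb'.eventually (lt_mem_nhds ht)
    obtain ⟨l₂, hl₂1, hl₂2⟩ := (hev.and self_mem_nhdsWithin).exists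
    have hl₂lt : l₂ < lambdaMin H := hl₂2
    have htl₂ : t < phi g H l₂ := EReal.coe_lt_coe_iff.mp hl₂1
    have hG0 : 0 ≤ g ⬝ᵥ g := by
      rw [dotProduct]; exact Finset.sum_nonneg fun i _ => mul_self_nonneg _
    set l₁ : ℝ := min (lambdaMin H - 1) (min (t - g ⬝ᵥ g) l₂) with hl₁def
    have hl₁lt : l₁ < lambdaMin H := by
      rw [hl₁def]
      have : min (lambdaMin H - 1) (min (t - g ⬝ᵥ g) l₂) ≤ lambdaMin H - 1 := min_le_left _ _
      linarith
    have hl₁l₂ : l₁ ≤ l₂ := le_trans (min_le_right _ _) (min_le_right _ _)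
    have hphil₁ : phi g H l₁ ≤ t := by
      have hup := phi_upper hH hg hl₁lt
      have hd1 : (1:ℝ) ≤ lambdaMin H - l₁ := by
        have : l₁ ≤ lambdaMin H - 1 := min_le_left _ _
        linarith
      have hdiv : (g ⬝ᵥ g) / (lambdaMin H - l₁) ≤ g ⬝ᵥ g := div_le_self hG0 hd1
      have hl₁t : l₁ ≤ t - g ⬝ᵥ g := le_trans (min_le_right _ _) (min_le_left _ _)
      linarith
    have hIcc : Set.Icc l₁ l₂ ⊆ Set.Iio (lambdaMin H) := fun μ hμ =>
      Set.mem_Iio.mpr (lt_of_le_of_lt hμ.2 hl₂lt)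
    have hivt := intermediate_value_Icc hl₁l₂ ((phi_contOn_s11 (g := g) hH).mono hIcc)
    have htmem : t ∈ Set.Icc (phi g H l₁) (phi g H l₂) := ⟨hphil₁, htl₂.le⟩
    obtain ⟨l, hlmem, hleq⟩ := hivt htmem
    exact ⟨l, lt_of_le_of_lt hlmem.2 hl₂lt, hleq⟩
  -- part (iii)
  have hiii : ∀ t : ℝ, tb < (t : EReal) → lam t = lambdaMin H := by
    intro t ht
    rcases lt_or_eq_of_le (hlamle t) with hlt | heq
    · exfalso
      have hteq := secular_of_lam_lt hH hlt
      have := hphi_lt_tb (lam t) hlt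
      rw [← hteq] at this
      exact absurd (lt_trans ht this) (lt_irrefl _)
    · exact heq
  -- for t < tb : lam t = the root
  have hroot : ∀ t : ℝ, (t : EReal) < tb → lam t < lambdaMin H ∧ phi g H (lam t) = t := by
    intro t ht
    obtain ⟨l, hl, hleq⟩ := hexists t ht
    have : lam t = l := by rw [← hleq]; exact hsec l hl
    rw [this, hleq]
    exact ⟨hl, rfl⟩
  -- derivative of phi at points below lambdaMin H is ≥ 1
  have hderiv_ge : ∀ l : ℝ, l < lambdaMin H → 1 ≤ deriv (phi g H) l := by
    intro l hl
    have hd : HasDerivAt (phi g H) (deriv (phi g H) l) l := (phi_diffAt hH hl).hasDerivAt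
    have hslope := hasDerivAt_iff_tendsto_slope.mp hd
    have hev : ∀ᶠ μ in 𝓝[≠] l, (1:ℝ) ≤ slope (phi g H) l μ := by
      have hIio : Set.Iio (lambdaMin H) ∈ 𝓝 l := Iio_mem_nhds hl
      filter_upwards [nhdsWithin_le_nhds hIio, self_mem_nhdsWithin] with μ hμ hμne
      have hμlt : μ < lambdaMin H := hμ
      rw [slope_def_field]
      rcases lt_or_gt_of_ne (hμne : μ ≠ l) with hlt | hgt
      · have hgap := phi_gap (g := g) hH hlt.le hl
        have hneg : μ - l < 0 := by linarith
        rw [le_div_iff_of_neg hneg]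
        linarith
      · have hgap := phi_gap (g := g) hH hgt.le hμlt
        rw [le_div_iff₀ (by linarith : (0:ℝ) < μ - l)]
        linarith
    exact ge_of_tendsto hslope hev
  -- open set below tb
  have hUopen : IsOpen {y : ℝ | (y : EReal) < tb} :=
    (isOpen_Iio (a := tb)).preimage continuous_coe_real_ereal
  have hUopen' : IsOpen {y : ℝ | tb < (y : EReal)} :=
    (isOpen_Ioi (a := tb)).preimage continuous_coe_real_ereal
  -- differentiability and derivative positivity for t < tb
  have hlow : ∀ t : ℝ, (t : EReal) < tb → HasDerivAt lam (deriv (phi g H) (lam t))⁻¹ t := by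
    intro t ht
    obtain ⟨hlt, hphieq⟩ := hroot t ht
    have hd : HasDerivAt (phi g H) (deriv (phi g H) (lam t)) (lam t) :=
      (phi_diffAt hH hlt).hasDerivAt
    have hdne : deriv (phi g H) (lam t) ≠ 0 := by
      have := hderiv_ge (lam t) hlt
      linarith
    have hfg : ∀ᶠ y in 𝓝 t, phi g H (lam y) = y := by
      filter_upwards [hUopen.mem_nhds ht] with y hy
      exact (hroot y hy).2
    exact HasDerivAt.of_local_left_inverse hcont.continuousAt hd hdne hfg
  refine ⟨hcont, ?_, hiii, ?_⟩
  · intro t ht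
    rcases lt_trichotomy (t : EReal) tb with hlt | heq | hgt
    · exact (hlow t hlt).differentiableAt
    · exact absurd heq ht
    · have hevq : lam =ᶠ[𝓝 t] fun _ => lambdaMin H := by
        filter_upwards [hUopen'.mem_nhds hgt] with y hy
        exact hiii y hy
      exact hevq.differentiableAt_iff.mpr (differentiableAt_const _)
  · intro t ht
    obtain ⟨hlt, hphieq⟩ := hroot t ht
    refine ⟨⟨hlt, ?_, ?_⟩, ?_⟩
    · show t = phi g H (lam t)
      exact hphieq.symm
    · intro l hl hleq
      have h1 : phi g H l = t := hleq.symm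
      have h2 : phi g H (lam t) = t := hphieq
      exact hmono.injOn (Set.mem_Iio.mpr hl) (Set.mem_Iio.mpr hlt) (by rw [h1, h2])
    · have := (hlow t ht).deriv
      rw [this]
      have h1 := hderiv_ge (lam t) hlt
      have : 0 < deriv (phi g H) (lam t) := by linarith
      exact inv_pos.mpr this
end
end

section
/- Let g ∈ ℝⁿ \ {0}, let H be a symmetric n×n real matrix, and let ρ: ℝ → [0,∞] be a proper closed convex function with ρ(0) = 0 satisfying Assumptions 1–3. For t ∈ ℝ, let λ(t) be the smallest eigenvalue of B(t) := [[t, gᵀ],[g, H]], and define k̂(t) := inf_{γ ≥ 0} { ρ(γ − 1) + γλ(t) }. Then for each t ∈ ℝ the infimum is attained, and the set of minimizing γ equals: {0} if λ(t) > 0; (argmin ρ + 1) ∩ [0,∞) if λ(t) = 0; and the singleton { (ρ⁺)'(−λ(t)) + 1 } if λ(t) < 0. -/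
open Matrix Filter Set Topology

noncomputable section

namespace RWHelp

lemma flip_lemma (x y : EReal) (hx : x ≠ ⊥) (hy : y ≠ ⊥) (a b p q : ℝ)
    (hpq : a + p = b + q) :
    x + (a : EReal) ≤ y + (b : EReal) ↔ (q : EReal) - y ≤ (p : EReal) - x := by
  induction x using EReal.rec with
  | bot => simp at hx
  | top =>
    induction y using EReal.rec with
    | bot => simp at hy
    | top => simp [sub_eq_add_neg]
    | coe y => simp [← EReal.coe_add, sub_eq_add_neg, ← EReal.coe_neg, ← EReal.coe_add]
  | coe x =>
    induction y using EReal.rec with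
    | bot => simp at hy
    | top => simp [sub_eq_add_neg]
    | coe y =>
      rw [← EReal.coe_add, ← EReal.coe_add, ← EReal.coe_sub, ← EReal.coe_sub,
        EReal.coe_le_coe_iff, EReal.coe_le_coe_iff]
      constructor <;> intro <;> linarith

lemma cond_iff (x : EReal) (hx : x ≠ ⊥) (a b : ℝ) :
    (b : EReal) ≤ (a : EReal) - x ↔ x + ((b - a : ℝ) : EReal) ≤ (0 : EReal) := by
  induction x using EReal.rec with
  | bot => simp at hx
  | top => simp [sub_eq_add_neg]
  | coe c =>
    rw [← EReal.coe_sub, ← EReal.coe_add, EReal.coe_le_coe_iff, ← EReal.coe_zero,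
      EReal.coe_le_coe_iff]
    constructor <;> intro <;> linarith

variable {ρ : ℝ → EReal}

lemma rho_ne_bot (hρ : RhoBasic ρ) (t : ℝ) : ρ t ≠ ⊥ := fun h => by
  have := hρ.1 t; rw [h] at this; simp at this

def IsMx (ρ : ℝ → EReal) (u s : ℝ) : Prop :=
  0 ≤ s ∧ ∀ t : ℝ, 0 ≤ t → ((u * t : ℝ) : EReal) - ρ t ≤ ((u * s : ℝ) : EReal) - ρ s

lemma mconj_nonneg (hρ : RhoBasic ρ) (u : ℝ) : 0 ≤ mconj ρ u := by
  have h := le_iSup (fun t : {t : ℝ // 0 ≤ t} => (((u * (t : ℝ) : ℝ) : EReal) - ρ t))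
    ⟨0, le_refl 0⟩
  simpa [hρ.2.1, mconj] using h

lemma mconj_ne_bot (hρ : RhoBasic ρ) (u : ℝ) : mconj ρ u ≠ ⊥ := fun h => by
  have := mconj_nonneg hρ u; rw [h] at this; simp at this

lemma ecases (x : EReal) : x = ⊥ ∨ (∃ c : ℝ, x = (c : EReal)) ∨ x = ⊤ := by
  induction x using EReal.rec with
  | bot => exact Or.inl rfl
  | coe c => exact Or.inr (Or.inl ⟨c, rfl⟩)
  | top => exact Or.inr (Or.inr rfl)

lemma mconj_ne_top (hρ : RhoBasic ρ) (h2 : Assump2 ρ) (u : ℝ) : mconj ρ u ≠ ⊤ := by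
  obtain ⟨T₀, hT₀⟩ := eventually_atTop.1 (h2 (u + 1))
  set T : ℝ := max T₀ 0 with hT
  have hTnn : (0:ℝ) ≤ T := le_max_right _ _
  have hbd : mconj ρ u ≤ ((|u| * T : ℝ) : EReal) := by
    apply iSup_le
    rintro ⟨t, ht⟩
    have hb := rho_ne_bot hρ t
    rcases ecases (ρ t) with H | ⟨c, H⟩ | H
    · exact absurd H hb
    · have hc : (0:ℝ) ≤ c := by
        have := hρ.1 t; rw [H] at this; exact_mod_cast this
      show ((u * t : ℝ) : EReal) - ρ t ≤ _
      rw [H, ← EReal.coe_sub, EReal.coe_le_coe_iff]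
      rcases le_or_gt t T with h | h
      · have h1 : u * t ≤ |u| * t := mul_le_mul_of_nonneg_right (le_abs_self u) ht
        have h2' : |u| * t ≤ |u| * T := mul_le_mul_of_nonneg_left h (abs_nonneg u)
        linarith
      · have hub := hT₀ t (le_trans (le_max_left _ _) h.le)
        rw [H, EReal.coe_le_coe_iff] at hub
        have h3 : (0:ℝ) ≤ |u| * T := mul_nonneg (abs_nonneg u) hTnn
        nlinarith
    · show ((u * t : ℝ) : EReal) - ρ t ≤ _
      rw [H]
      simp [sub_eq_add_neg]
  intro h; rw [h] at hbd
  exact absurd hbd (not_le.mpr (EReal.coe_lt_top _))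

lemma rho_ne_top_of_mx {u s : ℝ} (hρ : RhoBasic ρ) (h : IsMx ρ u s) : ρ s ≠ ⊤ := by
  intro htop
  have := h.2 0 le_rfl
  rw [htop, hρ.2.1, mul_zero] at this
  simp [sub_eq_add_neg] at this

lemma mconj_eq_of_mx {u s : ℝ} (hρ : RhoBasic ρ) (h : IsMx ρ u s) :
    mconj ρ u = ((u * s - (ρ s).toReal : ℝ) : EReal) := by
  have hrs : ((ρ s).toReal : EReal) = ρ s :=
    EReal.coe_toReal (rho_ne_top_of_mx hρ h) (rho_ne_bot hρ s)
  apply le_antisymm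
  · apply iSup_le
    rintro ⟨t, ht⟩
    exact (h.2 t ht).trans_eq (by rw [EReal.coe_sub, hrs])
  · have h0 : ((u * s : ℝ) : EReal) - ρ s ≤ mconj ρ u :=
      le_iSup (fun t : {t : ℝ // 0 ≤ t} => (((u * (t : ℝ) : ℝ) : EReal) - ρ t)) ⟨s, h.1⟩
    rwa [← hrs, ← EReal.coe_sub] at h0

lemma mconjR_eq_of_mx {u s : ℝ} (hρ : RhoBasic ρ) (h : IsMx ρ u s) :
    mconjR ρ u = u * s - (ρ s).toReal := by
  rw [mconjR, mconj_eq_of_mx hρ h, EReal.toReal_coe]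

lemma subgrad_of_mx {u s : ℝ} (hρ : RhoBasic ρ) (h2 : Assump2 ρ) (h : IsMx ρ u s)
    (u' : ℝ) : mconjR ρ u + s * (u' - u) ≤ mconjR ρ u' := by
  have hrs : ((ρ s).toReal : EReal) = ρ s :=
    EReal.coe_toReal (rho_ne_top_of_mx hρ h) (rho_ne_bot hρ s)
  have hle : ((u' * s - (ρ s).toReal : ℝ) : EReal) ≤ mconj ρ u' := by
    have h0 : ((u' * s : ℝ) : EReal) - ρ s ≤ mconj ρ u' :=
      le_iSup (fun t : {t : ℝ // 0 ≤ t} => (((u' * (t : ℝ) : ℝ) : EReal) - ρ t)) ⟨s, h.1⟩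
    rwa [← hrs, ← EReal.coe_sub] at h0
  have h1 := EReal.toReal_le_toReal hle (EReal.coe_ne_bot _) (mconj_ne_top hρ h2 u')
  rw [EReal.toReal_coe] at h1
  rw [mconjR_eq_of_mx hρ h]
  show _ ≤ mconjR ρ u'
  rw [mconjR]
  linarith

lemma eq_deriv_of_subgrad {f : ℝ → ℝ} {u s : ℝ} (hf : DifferentiableAt ℝ f u)
    (h : ∀ u', f u + s * (u' - u) ≤ f u') : s = deriv f u := by
  set φ := fun x => f x - (s * (x - u) + f u) with hφ
  have hmin : IsLocalMin φ u := Filter.Eventually.of_forall fun x => by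
    have := h x; simp only [φ]; ring_nf; nlinarith
  have hder : HasDerivAt φ (deriv f u - s) u := by
    have h1 : HasDerivAt (fun x => s * (x - u) + f u) s u := by
      simpa using (((hasDerivAt_id u).sub_const u).const_mul s).add_const (f u)
    exact hf.hasDerivAt.sub h1
  have := hmin.deriv_eq_zero
  rw [hder.deriv] at this
  linarith

end RWHelp

namespace RWHelp2
open RWHelp

lemma exists_mx {ρ : ℝ → EReal} (hρ : RhoBasic ρ) (h2 : Assump2 ρ) (u : ℝ) :
    ∃ s, IsMx ρ u s := by
  classical
  set r : ℝ := mconjR ρ u with hr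
  have hnt := mconj_ne_top hρ h2 u
  have hnb := mconj_ne_bot hρ u
  have hcoe : ((r : ℝ) : EReal) = mconj ρ u := EReal.coe_toReal hnt hnb
  have hr0 : 0 ≤ r := by
    have := mconj_nonneg hρ u
    rw [← hcoe] at this
    exact_mod_cast this
  obtain ⟨T₀, hT₀⟩ := eventually_atTop.1 (h2 (u + 1))
  set T : ℝ := max T₀ 1 with hT
  have hT1 : (1:ℝ) ≤ T := le_max_right _ _
  -- bound for large t
  have key : ∀ t : ℝ, T < t → ((u * t : ℝ) : EReal) - ρ t ≤ ((-t : ℝ) : EReal) := by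
    intro t ht
    have hub := hT₀ t (le_trans (le_max_left _ _) ht.le)
    rcases ecases (ρ t) with H | ⟨c, H⟩ | H
    · exact absurd H (rho_ne_bot hρ t)
    · rw [H, EReal.coe_le_coe_iff] at hub
      rw [H, ← EReal.coe_sub, EReal.coe_le_coe_iff]
      nlinarith
    · rw [H]; simp [sub_eq_add_neg]
  -- the nested compact sets
  set E : ℕ → Set ℝ := fun n =>
    Icc (0:ℝ) T ∩ {t : ℝ | ρ t + ((r - 1/(n+2) - u*t : ℝ) : EReal) ≤ (0 : EReal)} with hE
  have hmemE : ∀ n (t : ℝ), t ∈ E n ↔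
      t ∈ Icc (0:ℝ) T ∧ ((r - 1/(n+2) : ℝ) : EReal) ≤ ((u * t : ℝ) : EReal) - ρ t := by
    intro n t
    rw [hE]
    constructor
    · rintro ⟨h1', h2'⟩
      refine ⟨h1', ?_⟩
      rw [cond_iff (ρ t) (rho_ne_bot hρ t)]
      exact h2'
    · rintro ⟨h1', h2'⟩
      refine ⟨h1', ?_⟩
      rw [cond_iff (ρ t) (rho_ne_bot hρ t)] at h2'
      exact h2'
  have hclosed : ∀ n, IsClosed (E n) := by
    intro n
    apply IsClosed.inter isClosed_Icc
    have hlsc : LowerSemicontinuous (fun t : ℝ => ρ t + ((r - 1/(n+2) - u*t : ℝ) : EReal)) := by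
      apply LowerSemicontinuous.add' hρ.2.2.1
      · exact (continuous_coe_real_ereal.comp (by continuity)).lowerSemicontinuous
      · intro x
        exact EReal.continuousAt_add (Or.inr (EReal.coe_ne_bot _))
          (Or.inl (rho_ne_bot hρ x))
    exact hlsc.isClosed_preimage 0
  have hanti : ∀ n, E (n+1) ⊆ E n := by
    intro n t ht
    rw [hmemE] at ht ⊢
    refine ⟨ht.1, le_trans ?_ ht.2⟩
    rw [EReal.coe_le_coe_iff]
    have h1' : (1:ℝ)/(n+1+2) ≤ 1/(n+2) := by
      apply one_div_le_one_div_of_le <;> push_cast <;> linarith [Nat.cast_nonneg (α := ℝ) n]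
    push_cast
    push_cast at h1'
    linarith
  have hnonempty : ∀ n, (E n).Nonempty := by
    intro n
    have hlt : ((r - 1/(n+2) : ℝ) : EReal) < mconj ρ u := by
      rw [← hcoe, EReal.coe_lt_coe_iff]
      have : (0:ℝ) < 1/(n+2) := by positivity
      linarith
    rw [mconj, lt_iSup_iff] at hlt
    obtain ⟨⟨t, ht0⟩, hlt⟩ := hlt
    refine ⟨t, (hmemE n t).2 ⟨⟨ht0, ?_⟩, hlt.le⟩⟩
    by_contra hcon
    push_neg at hcon
    have hk := key t hcon
    have := hlt.trans_le hk
    rw [EReal.coe_lt_coe_iff] at this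
    have hn2 : (1:ℝ)/(n+2) ≤ 1 := by
      rw [div_le_one (by positivity)]
      linarith [Nat.cast_nonneg (α := ℝ) n]
    linarith
  have hcpt : IsCompact (E 0) :=
    IsCompact.of_isClosed_subset isCompact_Icc (hclosed 0) inter_subset_left
  obtain ⟨s, hs⟩ := IsCompact.nonempty_iInter_of_sequence_nonempty_isCompact_isClosed
    E hanti hnonempty hcpt hclosed
  rw [mem_iInter] at hs
  have hs0 : 0 ≤ s := ((hmemE 0 s).1 (hs 0)).1.1
  -- limit argument
  have hsup : ((r : ℝ) : EReal) ≤ ((u * s : ℝ) : EReal) - ρ s := by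
    rcases ecases (ρ s) with H | ⟨c, H⟩ | H
    · exact absurd H (rho_ne_bot hρ s)
    · rw [H, ← EReal.coe_sub, EReal.coe_le_coe_iff]
      have hall : ∀ n : ℕ, r - 1/(n+2) ≤ u * s - c := by
        intro n
        have := ((hmemE n s).1 (hs n)).2
        rw [H, ← EReal.coe_sub, EReal.coe_le_coe_iff] at this
        exact this
      have htend : Tendsto (fun n : ℕ => r - 1/((n:ℝ)+2)) atTop (𝓝 (r - 0)) := by
        apply Tendsto.const_sub
        have h0 := (tendsto_one_div_add_atTop_nhds_zero_nat (𝕜 := ℝ)).comp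
          (tendsto_add_atTop_nat 1)
        convert h0 using 2 with n
        simp [Function.comp]
        push_cast
        ring
      rw [sub_zero] at htend
      exact le_of_tendsto htend (Filter.Eventually.of_forall hall)
    · exfalso
      have := ((hmemE 0 s).1 (hs 0)).2
      rw [H] at this
      simp [sub_eq_add_neg] at this
  refine ⟨s, hs0, fun t ht => ?_⟩
  have h1' : ((u * t : ℝ) : EReal) - ρ t ≤ mconj ρ u :=
    le_iSup (fun t : {t : ℝ // 0 ≤ t} => (((u * (t : ℝ) : ℝ) : EReal) - ρ t)) ⟨t, ht⟩
  exact le_trans h1' (le_trans (le_of_eq hcoe.symm) hsup)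

end RWHelp2


theorem stmt12 {n : ℕ} (g : Fin n → ℝ) (hg : g ≠ 0)
    (H : Matrix (Fin n) (Fin n) ℝ) (hH : H.IsSymm)
    (ρ : ℝ → EReal) (hρ : RhoBasic ρ) (h1 : Assump1 ρ) (h2 : Assump2 ρ) (h3 : Assump3 ρ)
    (t : ℝ) (lamt : ℝ) (hlamt : lamt = lambdaMin (Bmat g H t))
    (obj : ℝ → EReal) (hobj : obj = fun γ : ℝ => ρ (γ - 1) + (((γ * lamt : ℝ)) : EReal))
    (S : Set ℝ) (hS : S = {γ : ℝ | 0 ≤ γ ∧ ∀ γ' : ℝ, 0 ≤ γ' → obj γ ≤ obj γ'}) :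
    S.Nonempty ∧
      (0 < lamt → S = {0}) ∧
      (lamt = 0 → S = ((fun s : ℝ => s + 1) '' argminSet ρ) ∩ Ici (0:ℝ)) ∧
      (lamt < 0 → S = {deriv (mconjR ρ) (-lamt) + 1}) := by
  have hnn := hρ.1
  have hρ0 : ρ 0 = 0 := hρ.2.1
  have hzero : ∀ t ≤ (0:ℝ), ρ t = 0 := h1.2.1
  have hmem : ∀ γ : ℝ, γ ∈ S ↔ 0 ≤ γ ∧ ∀ γ' : ℝ, 0 ≤ γ' → obj γ ≤ obj γ' := by
    intro γ; rw [hS]; exact Iff.rfl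
  have hobjval : ∀ γ : ℝ, obj γ = ρ (γ - 1) + ((γ * lamt : ℝ) : EReal) := by
    intro γ; rw [hobj]
  have hobj1 : obj 1 = ((lamt : ℝ) : EReal) := by
    rw [hobjval]; norm_num [hρ0]
  have hobj0 : obj 0 = 0 := by
    rw [hobjval, hzero (0 - 1 : ℝ) (by norm_num)]; norm_num
  have casePos : 0 < lamt → S = {0} := by
    intro hp
    ext γ
    rw [hmem γ, mem_singleton_iff]
    constructor
    · rintro ⟨hγ0, hγ⟩
      have h0 := hγ 0 le_rfl
      rw [hobj0] at h0
      have hge : ((γ * lamt : ℝ) : EReal) ≤ obj γ := by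
        rw [hobjval]
        exact le_add_of_nonneg_left (hnn _)
      have hle0 : ((γ * lamt : ℝ) : EReal) ≤ 0 := le_trans hge h0
      rw [← EReal.coe_zero, EReal.coe_le_coe_iff] at hle0
      nlinarith
    · rintro rfl
      refine ⟨le_rfl, fun γ' hγ' => ?_⟩
      rw [hobj0, hobjval]
      exact add_nonneg (hnn _) (EReal.coe_nonneg.mpr (mul_nonneg hγ' hp.le))
  have caseZero : lamt = 0 → S = ((fun s : ℝ => s + 1) '' argminSet ρ) ∩ Ici (0:ℝ) := by
    intro hz
    have hobjz : ∀ γ : ℝ, obj γ = ρ (γ - 1) := by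
      intro γ; rw [hobjval, hz]; simp
    ext γ
    rw [hmem γ]
    simp only [mem_inter_iff, mem_image, mem_Ici, argminSet, mem_setOf_eq]
    constructor
    · rintro ⟨hγ0, hγ⟩
      refine ⟨⟨γ - 1, fun s => ?_, by ring⟩, hγ0⟩
      have h1' := hγ 1 zero_le_one
      rw [hobjz γ, hobjz 1] at h1'
      norm_num [hρ0] at h1'
      exact le_trans h1' (hnn s)
    · rintro ⟨⟨s, hsmin, hs1⟩, hγ0⟩
      refine ⟨hγ0, fun γ' hγ' => ?_⟩
      rw [hobjz γ, hobjz γ']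
      have hγs : γ - 1 = s := by linarith
      rw [hγs]
      exact hsmin _
  have caseNeg : lamt < 0 → S = {deriv (mconjR ρ) (-lamt) + 1} := by
    intro hneg
    set u : ℝ := -lamt with hu
    have hupos : 0 < u := by rw [hu]; linarith
    obtain ⟨s₀, hs₀⟩ := RWHelp2.exists_mx hρ h2 u
    have hs₀d : s₀ = deriv (mconjR ρ) u :=
      RWHelp.eq_deriv_of_subgrad (h3 u hupos) (RWHelp.subgrad_of_mx hρ h2 hs₀)
    rw [hs₀d] at hs₀
    set d : ℝ := deriv (mconjR ρ) u with hd
    have hd0 : 0 ≤ d := hs₀.1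
    have htrans : ∀ a b : ℝ, (obj a ≤ obj b ↔
        ((u * (b - 1) : ℝ) : EReal) - ρ (b - 1) ≤ ((u * (a - 1) : ℝ) : EReal) - ρ (a - 1)) := by
      intro a b
      rw [hobjval a, hobjval b]
      exact RWHelp.flip_lemma _ _ (RWHelp.rho_ne_bot hρ _) (RWHelp.rho_ne_bot hρ _)
        _ _ _ _ (by rw [hu]; ring)
    have hd1min : ∀ γ' : ℝ, 0 ≤ γ' → obj (d + 1) ≤ obj γ' := by
      have hge1 : ∀ γ' : ℝ, 1 ≤ γ' → obj (d + 1) ≤ obj γ' := by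
        intro γ' h
        rw [htrans]
        have h2' := hs₀.2 (γ' - 1) (by linarith)
        simpa using h2'
      intro γ' hγ'
      rcases le_or_gt 1 γ' with h | h
      · exact hge1 γ' h
      · have hlow : obj γ' = ((γ' * lamt : ℝ) : EReal) := by
          rw [hobjval, hzero (γ' - 1) (by linarith), zero_add]
        calc obj (d + 1) ≤ obj 1 := hge1 1 le_rfl
          _ = ((lamt : ℝ) : EReal) := hobj1
          _ ≤ ((γ' * lamt : ℝ) : EReal) := by
              rw [EReal.coe_le_coe_iff]; nlinarith
          _ = obj γ' := hlow.symm
    ext γ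
    rw [hmem γ, mem_singleton_iff]
    constructor
    · rintro ⟨hγ0, hγ⟩
      have hγ1 : 1 ≤ γ := by
        by_contra hcon
        push_neg at hcon
        have h1' := hγ 1 zero_le_one
        rw [hobjval γ, hobj1, hzero (γ - 1) (by linarith), zero_add,
          EReal.coe_le_coe_iff] at h1'
        nlinarith
      have hIs : RWHelp.IsMx ρ u (γ - 1) := by
        refine ⟨by linarith, fun s hs => ?_⟩
        have h2' := (htrans γ (s + 1)).mp (hγ (s + 1) (by linarith))
        simpa using h2'
      have heq := RWHelp.eq_deriv_of_subgrad (h3 u hupos) (RWHelp.subgrad_of_mx hρ h2 hIs)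
      rw [← hd] at heq
      linarith
    · rintro rfl
      exact ⟨by linarith, hd1min⟩
  refine ⟨?_, casePos, caseZero, caseNeg⟩
  rcases lt_trichotomy lamt 0 with h | h | h
  · rw [caseNeg h]; exact ⟨_, rfl⟩
  · rw [caseZero h]
    refine ⟨1, ⟨0, fun s => ?_, by norm_num⟩, by norm_num⟩
    rw [hρ0]; exact hnn s
  · rw [casePos h]; exact ⟨0, rfl⟩

end
end
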